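/- arXiv:2605.02850 — 12 statements merged into one kernel-verified Lean document; each statement's English description precedes it below -/
import Mathlib

section
/- Let n be a positive integer, O an n×n complex Hermitian matrix, and ρ an n×n density matrix. Then the function γ ↦ (1/γ)·log(Re Tr(exp(γ•O)·ρ)), defined for real γ ≠ 0, tends to Re Tr(O·ρ) as γ tends to 0 within ℝ \ {0} (i.e., the limit along the punctured neighborhood filter of 0 is the standard expectation value Re Tr(O·ρ)). -/
/-!
Since `Tr ρ = 1`, the function `f γ = Re Tr (exp (γ • O) * ρ)` equals `1` at `γ = 0`, so the
tilted loss `(1/γ) · log (f γ)` is the difference quotient of `log ∘ f` at `0`. Its limit is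
therefore `(log ∘ f)' 0 = f' 0 / f 0 = Re Tr (O * ρ)`.
-/

open Matrix Filter NormedSpace ComplexOrder
open scoped Topology

theorem tendsto_inv_mul_log_nhdsNE_zero_of_hasDerivAt {f : ℝ → ℝ} {d : ℝ}
    (hf : HasDerivAt f d 0) (hf₀ : f 0 = 1) :
    Tendsto (fun γ => (1 / γ) * Real.log (f γ)) (𝓝[≠] 0) (𝓝 d) := by
  have hlog : HasDerivAt (fun γ => Real.log (f γ)) d 0 := by
    simpa [hf₀] using hf.log (by simp [hf₀])
  refine (hasDerivAt_iff_tendsto_slope.mp hlog).congr fun γ => ?_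
  simp [slope_def_field, hf₀, div_eq_inv_mul]

theorem hasDerivAt_re_trace_exp_smul_mul_zero {m : Type*} [Fintype m] [DecidableEq m]
    (O ρ : Matrix m m ℂ) :
    HasDerivAt (fun γ : ℝ => (exp (γ • O) * ρ).trace.re) (O * ρ).trace.re 0 := by
  -- Differentiating `exp` needs a Banach-algebra norm on matrices; any one induces the
  -- topology the statement uses.
  let _ : NormedRing (Matrix m m ℂ) := Matrix.linftyOpNormedRing
  let _ : NormedAlgebra ℝ (Matrix m m ℂ) := Matrix.linftyOpNormedAlgebra
  have hexp := (hasDerivAt_exp_smul_const' (𝕂 := ℝ) O 0).mul_const ρ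
  rw [zero_smul, exp_zero, mul_one] at hexp
  let reTrace : Matrix m m ℂ →L[ℝ] ℝ :=
    (Complex.reLm.comp (traceLinearMap m ℝ ℂ)).toContinuousLinearMap
  exact reTrace.hasFDerivAt.comp_hasDerivAt 0 hexp

theorem qtl_tendsto_expectation_at_zero_general (n : ℕ)
    (O ρ : Matrix (Fin n) (Fin n) ℂ)
    (hρtr : ρ.trace = 1) :
    Tendsto
      (fun γ : ℝ => (1 / γ) * Real.log ((exp (γ • O) * ρ).trace.re))
      (nhdsWithin 0 {(0 : ℝ)}ᶜ)
      (nhds ((O * ρ).trace.re)) :=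
  tendsto_inv_mul_log_nhdsNE_zero_of_hasDerivAt (hasDerivAt_re_trace_exp_smul_mul_zero O ρ)
    (by simp [hρtr])

/-- **Convergence of the quantum tilted loss.** For an `n × n` Hermitian observable `O` and
a density matrix `ρ`, the quantum tilted loss `γ ↦ (1/γ) · log (Re Tr (exp (γ • O) * ρ))`
tends to the standard expectation value `Re Tr (O * ρ)` as `γ → 0` within `ℝ \ {0}`. -/
theorem qtl_tendsto_expectation_at_zero (n : ℕ) (hn : 0 < n)
    (O ρ : Matrix (Fin n) (Fin n) ℂ)
    (hO : O.IsHermitian) (hρ : ρ.PosSemidef) (hρtr : ρ.trace = 1) :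
    Tendsto
      (fun γ : ℝ => (1 / γ) * Real.log ((exp (γ • O) * ρ).trace.re))
      (nhdsWithin 0 {(0 : ℝ)}ᶜ)
      (nhds ((O * ρ).trace.re)) :=
  qtl_tendsto_expectation_at_zero_general n O ρ hρtr
end

section
/- Let O_A be an n×n and O_B an m×m complex Hermitian matrix, and let ρ_A, ρ_B be density matrices of sizes n×n and m×m. For every real γ ≠ 0, the quantum tilted loss is additive over tensor products: L_γ(O_A ⊗ I_m + I_n ⊗ O_B, ρ_A ⊗ ρ_B) = L_γ(O_A, ρ_A) + L_γ(O_B, ρ_B), where ⊗ denotes the Kronecker product and I_n, I_m identity matrices. -/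
/-!
The generators `A ⊗ₖ 1` and `1 ⊗ₖ B` commute, so the exponential of their sum is
`exp A ⊗ₖ exp B`, and the trace of a Kronecker product is the product of the traces: the tilted
partition function `Tr (exp (γ • O) * ρ)` is multiplicative. It is a positive real, since with
`C = exp ((γ / 2) • O)` it equals `Tr (C * ρ * Cᴴ)`, the trace of a nonzero positive semidefinite
matrix. The logarithm then turns the product into a sum.
-/

open Matrix Filter NormedSpace ComplexOrder Kronecker

namespace Matrix

section RingHom

variable {α : Type*} [CommSemiring α] {m n : Type*} [Fintype m] [DecidableEq m] [Fintype n]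
  [DecidableEq n]

def kroneckerOneRingHom : Matrix m m α →+* Matrix (m × n) (m × n) α where
  toFun A := A ⊗ₖ (1 : Matrix n n α)
  map_one' := one_kronecker_one
  map_mul' A B := by rw [← mul_kronecker_mul, one_mul]
  map_zero' := zero_kronecker _
  map_add' A B := add_kronecker _ _ _

def oneKroneckerRingHom : Matrix n n α →+* Matrix (m × n) (m × n) α where
  toFun B := (1 : Matrix m m α) ⊗ₖ B
  map_one' := one_kronecker_one
  map_mul' A B := by rw [← mul_kronecker_mul, one_mul]
  map_zero' := kronecker_zero _
  map_add' A B := kronecker_add _ _ _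

end RingHom

variable {𝕜 : Type*} [RCLike 𝕜] {m n : Type*} [Fintype m] [Fintype n]

theorem PosSemidef.trace_pos {A : Matrix n n 𝕜} (hA : A.PosSemidef) (h0 : A ≠ 0) :
    0 < A.trace :=
  hA.trace_nonneg.lt_of_ne (Ne.symm (mt hA.trace_eq_zero_iff.mp h0))

variable [DecidableEq m] [DecidableEq n]

theorem map_exp_of_continuous {F : Type*} [FunLike F (Matrix m m 𝕜) (Matrix n n 𝕜)]
    [RingHomClass F (Matrix m m 𝕜) (Matrix n n 𝕜)] (f : F) (hf : Continuous f)
    (A : Matrix m m 𝕜) : f (exp A) = exp (f A) :=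
  open scoped Norms.Operator in NormedSpace.map_exp f hf A

theorem exp_kronecker_one (A : Matrix m m 𝕜) :
    exp (A ⊗ₖ (1 : Matrix n n 𝕜)) = exp A ⊗ₖ (1 : Matrix n n 𝕜) :=
  (map_exp_of_continuous (kroneckerOneRingHom (n := n))
    (continuous_matrix fun _ _ => (continuous_id.matrix_elem _ _).mul continuous_const) A).symm

theorem exp_one_kronecker (B : Matrix n n 𝕜) :
    exp ((1 : Matrix m m 𝕜) ⊗ₖ B) = (1 : Matrix m m 𝕜) ⊗ₖ exp B :=
  (map_exp_of_continuous (oneKroneckerRingHom (m := m))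
    (continuous_matrix fun _ _ => continuous_const.mul (continuous_id.matrix_elem _ _)) B).symm

theorem exp_kronecker_one_add_one_kronecker (A : Matrix m m 𝕜) (B : Matrix n n 𝕜) :
    exp (A ⊗ₖ (1 : Matrix n n 𝕜) + (1 : Matrix m m 𝕜) ⊗ₖ B) = exp A ⊗ₖ exp B := by
  have hcomm : Commute (A ⊗ₖ (1 : Matrix n n 𝕜)) ((1 : Matrix m m 𝕜) ⊗ₖ B) := by
    simp only [Commute, SemiconjBy, ← mul_kronecker_mul, one_mul, mul_one]
  rw [exp_add_of_commute _ _ hcomm, exp_kronecker_one, exp_one_kronecker, ← mul_kronecker_mul,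
    one_mul, mul_one]

theorem trace_exp_kronecker_sum_mul_kronecker (A ρ : Matrix m m 𝕜) (B σ : Matrix n n 𝕜) :
    (exp (A ⊗ₖ (1 : Matrix n n 𝕜) + (1 : Matrix m m 𝕜) ⊗ₖ B) * (ρ ⊗ₖ σ)).trace
      = (exp A * ρ).trace * (exp B * σ).trace := by
  rw [exp_kronecker_one_add_one_kronecker, ← mul_kronecker_mul, trace_kronecker]

theorem trace_exp_mul_pos {H ρ : Matrix n n 𝕜} (hH : H.IsHermitian) (hρ : ρ.PosSemidef)
    (hρ0 : ρ ≠ 0) : 0 < (exp H * ρ).trace := by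
  set C := exp ((2⁻¹ : ℝ) • H)
  have hC : C.IsHermitian := (hH.smul (IsSelfAdjoint.all _)).exp
  have hCC : exp H = C * C := by
    rw [← exp_add_of_commute _ _ (Commute.refl _), ← add_smul]
    norm_num
  have hconj : (C * ρ * Cᴴ).PosSemidef := hρ.mul_mul_conjTranspose_same C
  have hconj0 : C * ρ * Cᴴ ≠ 0 := by
    have hCu : IsUnit C := isUnit_exp _
    rwa [hC.eq, ne_eq, hCu.mul_left_eq_zero, hCu.mul_right_eq_zero]
  calc 0 < (C * ρ * Cᴴ).trace := hconj.trace_pos hconj0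
    _ = (exp H * ρ).trace := by rw [hCC, hC.eq, trace_mul_cycle, mul_assoc]

end Matrix

theorem Complex.log_re_mul_of_pos {z w : ℂ} (hz : 0 < z) (hw : 0 < w) :
    Real.log (z * w).re = Real.log z.re + Real.log w.re := by
  obtain ⟨hz_re, hz_im⟩ := Complex.pos_iff.mp hz
  obtain ⟨hw_re, -⟩ := Complex.pos_iff.mp hw
  rw [Complex.mul_re, ← hz_im, zero_mul, sub_zero, Real.log_mul hz_re.ne' hw_re.ne']

theorem qtl_additive_tensor_general (n m : ℕ)
    (OA ρA : Matrix (Fin n) (Fin n) ℂ) (OB ρB : Matrix (Fin m) (Fin m) ℂ)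
    (hOA : OA.IsHermitian) (hOB : OB.IsHermitian)
    (hρA : ρA.PosSemidef) (hρAtr : ρA.trace = 1)
    (hρB : ρB.PosSemidef) (hρBtr : ρB.trace = 1)
    (γ : ℝ) :
    (1 / γ) * Real.log
        ((exp (γ • (OA ⊗ₖ (1 : Matrix (Fin m) (Fin m) ℂ)
              + (1 : Matrix (Fin n) (Fin n) ℂ) ⊗ₖ OB)) * (ρA ⊗ₖ ρB)).trace.re)
      = (1 / γ) * Real.log ((exp (γ • OA) * ρA).trace.re)
        + (1 / γ) * Real.log ((exp (γ • OB) * ρB).trace.re) := by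
  have hA := trace_exp_mul_pos (hOA.smul (IsSelfAdjoint.all γ)) hρA
    (by rintro rfl; simp at hρAtr)
  have hB := trace_exp_mul_pos (hOB.smul (IsSelfAdjoint.all γ)) hρB
    (by rintro rfl; simp at hρBtr)
  rw [smul_add, ← smul_kronecker, ← kronecker_smul, trace_exp_kronecker_sum_mul_kronecker,
    Complex.log_re_mul_of_pos hA hB, mul_add]

/-- **Additivity of the quantum tilted loss over tensor products.** For Hermitian observables
`O_A`, `O_B` and density matrices `ρ_A`, `ρ_B`, and any real `γ ≠ 0`,
`L_γ(O_A ⊗ I + I ⊗ O_B, ρ_A ⊗ ρ_B) = L_γ(O_A, ρ_A) + L_γ(O_B, ρ_B)`. -/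
theorem qtl_additive_tensor (n m : ℕ)
    (OA ρA : Matrix (Fin n) (Fin n) ℂ) (OB ρB : Matrix (Fin m) (Fin m) ℂ)
    (hOA : OA.IsHermitian) (hOB : OB.IsHermitian)
    (hρA : ρA.PosSemidef) (hρAtr : ρA.trace = 1)
    (hρB : ρB.PosSemidef) (hρBtr : ρB.trace = 1)
    (γ : ℝ) (hγ : γ ≠ 0) :
    (1 / γ) * Real.log
        ((exp (γ • (OA ⊗ₖ (1 : Matrix (Fin m) (Fin m) ℂ)
              + (1 : Matrix (Fin n) (Fin n) ℂ) ⊗ₖ OB)) * (ρA ⊗ₖ ρB)).trace.re)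
      = (1 / γ) * Real.log ((exp (γ • OA) * ρA).trace.re)
        + (1 / γ) * Real.log ((exp (γ • OB) * ρB).trace.re) :=
  qtl_additive_tensor_general n m OA ρA OB ρB hOA hOB hρA hρAtr hρB hρBtr γ
end

section
/- Let O be an n×n complex Hermitian matrix and ρ an n×n density matrix. Define F : ℝ → ℝ by F(γ) = (1/γ)·log(Re Tr(exp(γ•O)·ρ)) for γ ≠ 0 and F(0) = Re Tr(O·ρ). Then F is monotone non-decreasing on all of ℝ: for all real γ₁ ≤ γ₂, F(γ₁) ≤ F(γ₂). -/
open Matrix ComplexOrder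

/-!
Diagonalising `O = U diag(λ) U*` turns `Tr (exp (γ • O) ρ)` into the classical moment generating
function `∑ pᵢ exp (γ λᵢ)`, where `pᵢ = (U* ρ U)ᵢᵢ` is a probability vector. For `γ ≠ 0` the
tilted loss is then `log` of the weighted power mean of order `γ` of the numbers `exp λᵢ`, and at
`γ = 0` it is `log` of their geometric mean, so monotonicity is the power-mean inequality
(with Jensen's inequality for `exp` at `γ = 0`).
-/

noncomputable def tiltedLoss {ι : Type*} [Fintype ι] (p x : ι → ℝ) (γ : ℝ) : ℝ :=
  if γ = 0 then ∑ i, p i * x i else (1 / γ) * Real.log (∑ i, p i * Real.exp (γ * x i))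

section TiltedLoss

variable {ι : Type*} [Fintype ι] {p : ι → ℝ} (x : ι → ℝ)

theorem sum_mul_exp_pos (hp : ∀ i, 0 ≤ p i) (hp1 : ∑ i, p i = 1) :
    0 < ∑ i, p i * Real.exp (x i) := by
  obtain ⟨i, -, hi⟩ := Finset.exists_ne_zero_of_sum_ne_zero (hp1 ▸ one_ne_zero)
  exact Finset.sum_pos' (fun j _ => mul_nonneg (hp j) (Real.exp_pos _).le)
    ⟨i, Finset.mem_univ i, mul_pos ((hp i).lt_of_ne' hi) (Real.exp_pos _)⟩

theorem sum_mul_le_log_sum_mul_exp (hp : ∀ i, 0 ≤ p i) (hp1 : ∑ i, p i = 1) :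
    ∑ i, p i * x i ≤ Real.log (∑ i, p i * Real.exp (x i)) := by
  rw [Real.le_log_iff_exp_le (sum_mul_exp_pos x hp hp1)]
  simpa using convexOn_exp.map_sum_le (t := Finset.univ) (w := p) (p := x)
    (fun i _ => hp i) hp1 (fun i _ => Set.mem_univ _)

theorem tiltedLoss_le_tiltedLoss_of_pos (hp : ∀ i, 0 ≤ p i) (hp1 : ∑ i, p i = 1)
    {a b : ℝ} (ha : 0 < a) (hab : a ≤ b) : tiltedLoss p x a ≤ tiltedLoss p x b := by
  have hb : 0 < b := ha.trans_le hab
  set S : ℝ → ℝ := fun γ => ∑ i, p i * Real.exp (γ * x i)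
  have hS : ∀ γ, 0 < S γ := fun γ => sum_mul_exp_pos (fun i => γ * x i) hp hp1
  -- the power-mean inequality `M₁ ≤ M_{b/a}` for the numbers `exp (a * x i)`
  have hpow : S a ≤ S b ^ (a / b) := by
    have h := Real.arith_mean_le_rpow_mean Finset.univ p (fun i => Real.exp (a * x i))
      (fun i _ => hp i) hp1 (fun i _ => (Real.exp_pos _).le) ((one_le_div ha).2 hab)
    have hexp : ∀ i, Real.exp (a * x i) ^ (b / a) = Real.exp (b * x i) := fun i => by
      rw [← Real.exp_mul]; congr 1; field_simp
    simpa only [hexp, one_div_div] using h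
  have hlog : Real.log (S a) ≤ a / b * Real.log (S b) := by
    rw [← Real.log_rpow (hS b)]
    exact Real.log_le_log (hS a) hpow
  simp only [tiltedLoss, if_neg ha.ne', if_neg hb.ne']
  rw [one_div, inv_mul_le_iff₀ ha]
  calc Real.log (S a) ≤ a / b * Real.log (S b) := hlog
    _ = a * (1 / b * Real.log (S b)) := by ring

theorem monotoneOn_tiltedLoss_Ici (hp : ∀ i, 0 ≤ p i) (hp1 : ∑ i, p i = 1) :
    MonotoneOn (tiltedLoss p x) (Set.Ici 0) := by
  intro a (ha : 0 ≤ a) b (hb : 0 ≤ b) hab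
  rcases ha.eq_or_lt with rfl | ha
  · rcases hb.eq_or_lt with rfl | hb
    · rfl
    · have hJensen := sum_mul_le_log_sum_mul_exp (fun i => b * x i) hp hp1
      simp only [tiltedLoss, ↓reduceIte, hb.ne']
      rw [one_div, inv_mul_eq_div, le_div_iff₀ hb]
      simpa [Finset.mul_sum, mul_left_comm, mul_comm] using hJensen
  · exact tiltedLoss_le_tiltedLoss_of_pos x hp hp1 ha hab

theorem tiltedLoss_neg (γ : ℝ) : tiltedLoss p x (-γ) = -tiltedLoss p (-x) γ := by
  rcases eq_or_ne γ 0 with rfl | hγ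
  · simp [tiltedLoss]
  · simp [tiltedLoss, hγ]

theorem monotone_tiltedLoss (hp : ∀ i, 0 ≤ p i) (hp1 : ∑ i, p i = 1) :
    Monotone (tiltedLoss p x) := by
  refine MonotoneOn.Iic_union_Ici (a := 0) ?_ (monotoneOn_tiltedLoss_Ici x hp hp1)
  intro a (ha : a ≤ 0) b (hb : b ≤ 0) hab
  have h := monotoneOn_tiltedLoss_Ici (-x) hp hp1 (neg_nonneg.2 hb) (neg_nonneg.2 ha)
    (neg_le_neg hab)
  have hreflect (γ : ℝ) : tiltedLoss p x γ = -tiltedLoss p (-x) (-γ) := by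
    simpa only [neg_neg] using tiltedLoss_neg x (-γ)
  rw [hreflect a, hreflect b]
  exact neg_le_neg h

end TiltedLoss

namespace Matrix.IsHermitian

variable {n 𝕜 : Type*} [RCLike 𝕜] [Fintype n] [DecidableEq n] {A : Matrix n n 𝕜}

noncomputable def eigenWeight (hA : A.IsHermitian) (ρ : Matrix n n 𝕜) (i : n) : ℝ :=
  RCLike.re ((star (hA.eigenvectorUnitary : Matrix n n 𝕜) * ρ * hA.eigenvectorUnitary) i i)

theorem eigenWeight_nonneg (hA : A.IsHermitian) {ρ : Matrix n n 𝕜} (hρ : ρ.PosSemidef) (i : n) :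
    0 ≤ hA.eigenWeight ρ i :=
  (RCLike.nonneg_iff.1 <|
    (hρ.conjTranspose_mul_mul_same (hA.eigenvectorUnitary : Matrix n n 𝕜)).diag_nonneg).1

theorem sum_eigenWeight (hA : A.IsHermitian) (ρ : Matrix n n 𝕜) :
    ∑ i, hA.eigenWeight ρ i = RCLike.re ρ.trace := by
  calc ∑ i, hA.eigenWeight ρ i
      = RCLike.re (star (hA.eigenvectorUnitary : Matrix n n 𝕜) * ρ * hA.eigenvectorUnitary).trace :=
        (map_sum _ _ _).symm
    _ = RCLike.re ρ.trace := by
        rw [trace_mul_cycle, Unitary.mul_star_self_of_mem hA.eigenvectorUnitary.2, Matrix.one_mul]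

theorem re_trace_cfc_mul (hA : A.IsHermitian) (f : ℝ → ℝ) (ρ : Matrix n n 𝕜) :
    RCLike.re (cfc f A * ρ).trace = ∑ i, hA.eigenWeight ρ i * f (hA.eigenvalues i) := by
  rw [hA.cfc_eq, IsHermitian.cfc, Unitary.conjStarAlgAut_apply, Matrix.mul_assoc,
    Matrix.mul_assoc, trace_mul_comm, Matrix.mul_assoc, trace, map_sum]
  refine Finset.sum_congr rfl fun i _ => ?_
  simp [diagonal_mul, eigenWeight, Matrix.mul_assoc, mul_comm]

theorem exp_smul_eq_cfc (hA : A.IsHermitian) (γ : ℝ) :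
    NormedSpace.exp (γ • A) = cfc (fun x => Real.exp (γ * x)) A := by
  rw [← cfc_smul_id (R := ℝ) γ A, hA.cfc_eq, hA.cfc_eq, IsHermitian.cfc, IsHermitian.cfc,
    Unitary.conjStarAlgAut_apply, Unitary.conjStarAlgAut_apply]
  set U : Matrix n n 𝕜 := (hA.eigenvectorUnitary : Matrix n n 𝕜)
  have hU : U * star U = 1 := Unitary.mul_star_self_of_mem hA.eigenvectorUnitary.2
  have hUunit : IsUnit U :=
    ⟨⟨U, star U, hU, Unitary.star_mul_self_of_mem hA.eigenvectorUnitary.2⟩, rfl⟩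
  rw [← inv_eq_right_inv hU, Matrix.exp_conj _ _ hUunit, exp_diagonal]
  congr 3
  funext i
  rw [Pi.coe_exp]
  simp only [Function.comp_apply, smul_eq_mul, Real.exp_eq_exp_ℝ]
  exact (NormedSpace.algebraMap_exp_comm _).symm

end Matrix.IsHermitian

theorem qtl_monotone_in_tilt_general (n : ℕ)
    (O ρ : Matrix (Fin n) (Fin n) ℂ)
    (hO : O.IsHermitian) (hρ : ρ.PosSemidef) (hρtr : ρ.trace = 1) :
    Monotone (fun γ : ℝ =>
      if γ = 0 then (O * ρ).trace.re
      else (1 / γ) * Real.log ((NormedSpace.exp (γ • O) * ρ).trace.re)) := by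
  have hmean : (O * ρ).trace.re = ∑ i, hO.eigenWeight ρ i * hO.eigenvalues i := by
    simpa only [cfc_id' ℝ O, RCLike.re_to_complex] using hO.re_trace_cfc_mul (fun x => x) ρ
  have hmgf (γ : ℝ) : (NormedSpace.exp (γ • O) * ρ).trace.re =
      ∑ i, hO.eigenWeight ρ i * Real.exp (γ * hO.eigenvalues i) := by
    rw [hO.exp_smul_eq_cfc]
    exact hO.re_trace_cfc_mul _ ρ
  have hweights : ∑ i, hO.eigenWeight ρ i = 1 := by
    rw [hO.sum_eigenWeight, hρtr, RCLike.one_re]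
  convert monotone_tiltedLoss hO.eigenvalues (hO.eigenWeight_nonneg hρ) hweights using 1
  ext γ
  simp only [tiltedLoss, hmean, hmgf]

/-- **Monotonicity of the quantum tilted loss in the tilt parameter.** For a Hermitian
observable `O` and a density matrix `ρ`, the function
`F(γ) = (1/γ)·log (Re Tr (exp (γ • O) * ρ))` for `γ ≠ 0`, extended by
`F(0) = Re Tr (O * ρ)`, is monotone non-decreasing on all of `ℝ`. -/
theorem qtl_monotone_in_tilt (n : ℕ) (hn : 0 < n)
    (O ρ : Matrix (Fin n) (Fin n) ℂ)
    (hO : O.IsHermitian) (hρ : ρ.PosSemidef) (hρtr : ρ.trace = 1) :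
    Monotone (fun γ : ℝ =>
      if γ = 0 then (O * ρ).trace.re
      else (1 / γ) * Real.log ((NormedSpace.exp (γ • O) * ρ).trace.re)) :=
  qtl_monotone_in_tilt_general n O ρ hO hρ hρtr
end

section
/- Let O be an n×n complex Hermitian matrix with eigenvalues λ_1,…,λ_n (with multiplicity) and corresponding orthonormal eigenvector basis v_1,…,v_n (as given by the spectral theorem), and let ρ be an n×n density matrix. For each i set p_i = Re⟨v_i, ρ·v_i⟩, so that each p_i ≥ 0 and Σ_i p_i = 1; the set S = {i : p_i > 0} is nonempty. Then the quantum tilted loss γ ↦ (1/γ)·log(Re Tr(exp(γ•O)·ρ)) tends to max_{i ∈ S} λ_i as γ → +∞, and tends to min_{i ∈ S} λ_i as γ → −∞. -/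
/-!
In the orthonormal eigenbasis `v`, `Re Tr(exp(γ • O) ρ) = ∑ pᵢ exp(γ λᵢ)` with `pᵢ ≥ 0` and
`∑ pᵢ = Tr ρ = 1`. If `M` is the largest `λᵢ` with `pᵢ > 0`, attained at `i₀`, then for `γ > 0`
this sum lies between `p_{i₀} exp(γ M)` and `exp(γ M)`, so its logarithm divided by `γ` is
`M + O(1/γ)`. The limit at `-∞` is the limit at `+∞` for `-λ`.
-/

open Matrix Filter NormedSpace ComplexOrder

lemma tendsto_inv_mul_log_of_exp_bounds {f : ℝ → ℝ} {M c₁ c₂ : ℝ} (hc₁ : 0 < c₁)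
    (hlow : ∀ᶠ γ in atTop, c₁ * Real.exp (γ * M) ≤ f γ)
    (hup : ∀ᶠ γ in atTop, f γ ≤ c₂ * Real.exp (γ * M)) :
    Tendsto (fun γ => (1 / γ) * Real.log (f γ)) atTop (nhds M) := by
  have hc₂ : 0 < c₂ := by
    obtain ⟨γ, hγlow, hγup⟩ := (hlow.and hup).exists
    exact pos_of_mul_pos_left ((mul_pos hc₁ (Real.exp_pos _)).trans_le (hγlow.trans hγup))
      (Real.exp_pos _).le
  have hlog_exp_bound : ∀ c, 0 < c → Tendsto (fun γ : ℝ => M + Real.log c / γ) atTop (nhds M) :=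
    fun c _ => by
      simpa using tendsto_const_nhds.add (tendsto_const_nhds.div_atTop (tendsto_id (α := ℝ)))
  have hrescale : ∀ γ c, 0 < γ → 0 < c →
      (1 / γ) * Real.log (c * Real.exp (γ * M)) = M + Real.log c / γ := by
    intro γ c hγ hc
    rw [Real.log_mul hc.ne' (Real.exp_ne_zero _), Real.log_exp]
    field_simp
    ring
  refine tendsto_of_tendsto_of_tendsto_of_le_of_le' (hlog_exp_bound c₁ hc₁)
    (hlog_exp_bound c₂ hc₂) ?_ ?_
  · filter_upwards [hlow, eventually_gt_atTop 0] with γ hγlow hγ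
    rw [← hrescale γ c₁ hγ hc₁]
    gcongr
  · filter_upwards [hlow, hup, eventually_gt_atTop 0] with γ hγlow hγup hγ
    rw [← hrescale γ c₂ hγ hc₂]
    gcongr
    exact (mul_pos hc₁ (Real.exp_pos _)).trans_le hγlow

section LogSumExp

variable {ι : Type*} [Fintype ι] {p : ι → ℝ}

lemma tendsto_inv_mul_log_sum_mul_exp_atTop (hp : ∀ i, 0 ≤ p i) (hS : ∃ i, 0 < p i)
    (lam : ι → ℝ) :
    Tendsto (fun γ : ℝ => (1 / γ) * Real.log (∑ i, p i * Real.exp (γ * lam i))) atTop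
      (nhds (sSup (lam '' {i | 0 < p i}))) := by
  set M := sSup (lam '' {i | 0 < p i})
  obtain ⟨i₀, hi₀, hM⟩ : M ∈ lam '' {i | 0 < p i} := by
    obtain ⟨i, hi⟩ := hS
    exact Set.Nonempty.csSup_mem ⟨lam i, i, hi, rfl⟩ (Set.toFinite _)
  have hle : ∀ i, 0 < p i → lam i ≤ M :=
    fun i hi => le_csSup (Set.toFinite _).bddAbove ⟨i, hi, rfl⟩
  refine tendsto_inv_mul_log_of_exp_bounds (c₂ := ∑ i, p i) hi₀ (.of_forall fun γ => ?_) ?_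
  · rw [← hM]
    exact Finset.single_le_sum (f := fun i => p i * Real.exp (γ * lam i))
      (fun i _ => mul_nonneg (hp i) (Real.exp_pos _).le) (Finset.mem_univ i₀)
  · filter_upwards [eventually_ge_atTop 0] with γ hγ
    rw [Finset.sum_mul]
    refine Finset.sum_le_sum fun i _ => ?_
    rcases (hp i).eq_or_lt with hpi | hpi
    · simp [← hpi]
    · gcongr
      exact hle i hpi

lemma tendsto_inv_mul_log_sum_mul_exp_atBot (hp : ∀ i, 0 ≤ p i) (hS : ∃ i, 0 < p i)
    (lam : ι → ℝ) :
    Tendsto (fun γ : ℝ => (1 / γ) * Real.log (∑ i, p i * Real.exp (γ * lam i))) atBot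
      (nhds (sInf (lam '' {i | 0 < p i}))) := by
  have h := ((tendsto_inv_mul_log_sum_mul_exp_atTop hp hS (-lam)).comp
    tendsto_neg_atBot_atTop).neg
  have hneg : sSup ((-lam) '' {i | 0 < p i}) = -sInf (lam '' {i | 0 < p i}) := by
    rw [Real.sInf_def, neg_neg, ← Set.image_neg_eq_neg, Set.image_image]
    rfl
  rw [hneg, neg_neg] at h
  refine h.congr fun γ => ?_
  simp

end LogSumExp

section Eigenbasis

variable {m : Type*} [Fintype m] {v : m → m → ℂ}

lemma conjTranspose_mul_mul_apply (ρ : Matrix m m ℂ) (i j : m) :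
    ((of v)ᵀᴴ * ρ * (of v)ᵀ) i j = star (v i) ⬝ᵥ ρ *ᵥ v j := by
  rw [mul_assoc, mul_apply, dotProduct]
  rfl

variable [DecidableEq m]

lemma conjTranspose_mul_self_of_orthonormal
    (horth : ∀ i j, star (v i) ⬝ᵥ v j = if i = j then 1 else 0) :
    (of v)ᵀᴴ * (of v)ᵀ = 1 := by
  ext i j
  rw [one_apply, ← horth i j]
  rfl

lemma mul_eq_mul_diagonal_of_mulVec_eq_smul {O : Matrix m m ℂ} {lam : m → ℝ}
    (heig : ∀ i, O *ᵥ v i = (lam i : ℂ) • v i) :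
    O * (of v)ᵀ = (of v)ᵀ * diagonal (fun i => (lam i : ℂ)) := by
  ext k j
  rw [mul_diagonal]
  simpa [mul_apply, mulVec, dotProduct, mul_comm] using congrFun (heig j) k

lemma exp_smul_eq_of_eigenbasis {O : Matrix m m ℂ} {lam : m → ℝ}
    (horth : ∀ i j, star (v i) ⬝ᵥ v j = if i = j then 1 else 0)
    (heig : ∀ i, O *ᵥ v i = (lam i : ℂ) • v i) (γ : ℝ) :
    exp (γ • O) = (of v)ᵀ * diagonal (fun i => Complex.exp (γ * lam i)) * (of v)ᵀᴴ := by
  set U := (of v)ᵀ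
  have hUU : U * Uᴴ = 1 := mul_eq_one_comm.mp (conjTranspose_mul_self_of_orthonormal horth)
  have hinv : U⁻¹ = Uᴴ := inv_eq_right_inv hUU
  have hconj : γ • O = U * diagonal (fun i => (γ * lam i : ℂ)) * U⁻¹ := by
    rw [hinv, ← mul_one (γ • O), ← hUU, ← mul_assoc, smul_mul_assoc,
      mul_eq_mul_diagonal_of_mulVec_eq_smul heig, ← mul_smul_comm, ← diagonal_smul]
    simp only [Pi.smul_def, Complex.real_smul]
    rfl
  rw [hconj, exp_conj U _ (.of_mul_eq_one _ hUU), hinv, exp_diagonal, Pi.exp_def,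
    ← Complex.exp_eq_exp_ℂ]

lemma sum_dotProduct_mulVec_of_orthonormal
    (horth : ∀ i j, star (v i) ⬝ᵥ v j = if i = j then 1 else 0) (ρ : Matrix m m ℂ) :
    ∑ i, star (v i) ⬝ᵥ ρ *ᵥ v i = ρ.trace := by
  have hUU := mul_eq_one_comm.mp (conjTranspose_mul_self_of_orthonormal horth)
  calc ∑ i, star (v i) ⬝ᵥ ρ *ᵥ v i = ((of v)ᵀᴴ * ρ * (of v)ᵀ).trace :=
        Finset.sum_congr rfl fun i _ => (conjTranspose_mul_mul_apply ρ i i).symm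
    _ = ρ.trace := by rw [trace_mul_cycle, hUU, one_mul]

lemma trace_exp_smul_mul_of_eigenbasis {O : Matrix m m ℂ} {lam : m → ℝ}
    (horth : ∀ i j, star (v i) ⬝ᵥ v j = if i = j then 1 else 0)
    (heig : ∀ i, O *ᵥ v i = (lam i : ℂ) • v i) (ρ : Matrix m m ℂ) (γ : ℝ) :
    (exp (γ • O) * ρ).trace.re = ∑ i, (star (v i) ⬝ᵥ ρ *ᵥ v i).re * Real.exp (γ * lam i) := by
  rw [exp_smul_eq_of_eigenbasis horth heig, mul_assoc, trace_mul_comm, ← mul_assoc, trace,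
    Complex.re_sum]
  refine Finset.sum_congr rfl fun i _ => ?_
  rw [diag_apply, mul_diagonal, conjTranspose_mul_mul_apply, ← Complex.ofReal_mul,
    ← Complex.ofReal_exp, Complex.re_mul_ofReal]

end Eigenbasis

theorem qtl_limits_at_infinity_general (n : ℕ)
    (O ρ : Matrix (Fin n) (Fin n) ℂ)
    (hρ : ρ.PosSemidef) (hρtr : ρ.trace = 1)
    (lam : Fin n → ℝ) (v : Fin n → (Fin n → ℂ))
    (heig : ∀ i, O.mulVec (v i) = (lam i : ℂ) • v i)
    (horth : ∀ i j, star (v i) ⬝ᵥ v j = if i = j then 1 else 0) :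
    Tendsto (fun γ : ℝ => (1 / γ) * Real.log ((NormedSpace.exp (γ • O) * ρ).trace.re))
        atTop
        (nhds (sSup (lam '' {i | 0 < (star (v i) ⬝ᵥ ρ.mulVec (v i)).re}))) ∧
    Tendsto (fun γ : ℝ => (1 / γ) * Real.log ((NormedSpace.exp (γ • O) * ρ).trace.re))
        atBot
        (nhds (sInf (lam '' {i | 0 < (star (v i) ⬝ᵥ ρ.mulVec (v i)).re}))) := by
  have hp : ∀ i, 0 ≤ (star (v i) ⬝ᵥ ρ *ᵥ v i).re := fun i => hρ.re_dotProduct_nonneg (v i)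
  have hsum : ∑ i, (star (v i) ⬝ᵥ ρ *ᵥ v i).re = 1 := by
    rw [← Complex.re_sum, sum_dotProduct_mulVec_of_orthonormal horth, hρtr, Complex.one_re]
  have hS : ∃ i, 0 < (star (v i) ⬝ᵥ ρ *ᵥ v i).re := by
    by_contra! h
    linarith [Finset.sum_nonpos fun i (_ : i ∈ Finset.univ) => h i]
  simp_rw [trace_exp_smul_mul_of_eigenbasis horth heig]
  exact ⟨tendsto_inv_mul_log_sum_mul_exp_atTop hp hS lam,
    tendsto_inv_mul_log_sum_mul_exp_atBot hp hS lam⟩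

/-- **γ-limits of the quantum tilted loss.** Let `O` be Hermitian with eigenvalues `lam i` and
orthonormal eigenvector basis `v i`, and let `ρ` be a density matrix. With
`p i = Re ⟨v i, ρ · v i⟩`, the quantum tilted loss tends to `max {lam i : p i > 0}` as
`γ → +∞` and to `min {lam i : p i > 0}` as `γ → −∞`. -/
theorem qtl_limits_at_infinity (n : ℕ) (hn : 0 < n)
    (O ρ : Matrix (Fin n) (Fin n) ℂ)
    (hO : O.IsHermitian) (hρ : ρ.PosSemidef) (hρtr : ρ.trace = 1)
    (lam : Fin n → ℝ) (v : Fin n → (Fin n → ℂ))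
    (heig : ∀ i, O.mulVec (v i) = (lam i : ℂ) • v i)
    (horth : ∀ i j, star (v i) ⬝ᵥ v j = if i = j then 1 else 0) :
    Tendsto (fun γ : ℝ => (1 / γ) * Real.log ((NormedSpace.exp (γ • O) * ρ).trace.re))
        atTop
        (nhds (sSup (lam '' {i | 0 < (star (v i) ⬝ᵥ ρ.mulVec (v i)).re}))) ∧
    Tendsto (fun γ : ℝ => (1 / γ) * Real.log ((NormedSpace.exp (γ • O) * ρ).trace.re))
        atBot
        (nhds (sInf (lam '' {i | 0 < (star (v i) ⬝ᵥ ρ.mulVec (v i)).re}))) :=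
  qtl_limits_at_infinity_general n O ρ hρ hρtr lam v heig horth
end

section
/- Let O be an n×n complex Hermitian matrix, o_min its smallest eigenvalue, and v a unit vector in ℂⁿ with O·v = o_min·v. Let ρ★ = v·v† be the associated rank-one projection (a pure density matrix). Then for every real γ ≠ 0, the quantum tilted loss attains the ground-state energy at ρ★: (1/γ)·log(Re Tr(exp(γ•O)·ρ★)) = o_min. Combined with the lower bound L_γ(O,ρ) ≥ o_min for all density matrices ρ, this shows that the global minimum of L_γ over all density matrices equals o_min. -/
open Matrix Filter NormedSpace ComplexOrder

/-!
An eigenvector of `A` for `μ` is an eigenvector of every power `A ^ k` for `μ ^ k`, so applying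
the exponential series of `γ • O` to the ground state `v` termwise gives
`exp (γ • O) v = e^{γ o_min} v`. Since `Tr (E · v v†) = v† E v` and `v† v = 1`, the tilted loss
evaluates to `(1/γ) log e^{γ o_min} = o_min`.
-/

namespace Matrix

variable {m 𝕂 : Type*} [Fintype m] [DecidableEq m]

theorem pow_mulVec_of_mulVec_eq_smul [CommSemiring 𝕂] {A : Matrix m m 𝕂} {v : m → 𝕂} {μ : 𝕂}
    (h : A *ᵥ v = μ • v) (k : ℕ) : (A ^ k) *ᵥ v = μ ^ k • v := by
  induction k with
  | zero => simp
  | succ k ih => rw [pow_succ', ← mulVec_mulVec, ih, mulVec_smul, h, smul_smul, pow_succ]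

-- `exp` on matrices needs no norm; any norm serves to sum its series.
attribute [local instance] Matrix.linftyOpNormedRing Matrix.linftyOpNormedAlgebra in
theorem exp_mulVec_of_mulVec_eq_smul [RCLike 𝕂] {A : Matrix m m 𝕂} {v : m → 𝕂} {μ : 𝕂}
    (h : A *ᵥ v = μ • v) : exp A *ᵥ v = exp μ • v := by
  have hA := (exp_series_hasSum_exp' (𝕂 := 𝕂) A).mapL
    ((mulVecBilin 𝕂 𝕂).flip v).toContinuousLinearMap
  have hμ := (exp_series_hasSum_exp' (𝕂 := 𝕂) μ).smul_const v
  simp only [LinearMap.coe_toContinuousLinearMap', LinearMap.flip_apply, mulVecBilin_apply,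
    smul_mulVec, pow_mulVec_of_mulVec_eq_smul h, smul_smul] at hA
  exact hA.unique hμ

end Matrix

theorem qtl_attains_min_at_ground_state_general (n : ℕ)
    (O : Matrix (Fin n) (Fin n) ℂ) (hO : O.IsHermitian)
    (v : Fin n → ℂ) (hv : star v ⬝ᵥ v = 1)
    (heig : O.mulVec v = ((⨅ i, hO.eigenvalues i : ℝ) : ℂ) • v)
    (γ : ℝ) (hγ : γ ≠ 0) :
    (1 / γ) * Real.log ((exp (γ • O) * vecMulVec v (star v)).trace.re)
      = ⨅ i, hO.eigenvalues i := by
  set c : ℝ := ⨅ i, hO.eigenvalues i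
  have hγO : (γ • O) *ᵥ v = ((γ * c : ℝ) : ℂ) • v := by
    rw [smul_mulVec, heig, ← smul_assoc, Complex.real_smul, Complex.ofReal_mul]
  have htrace : (exp (γ • O) * vecMulVec v (star v)).trace = Complex.exp ((γ * c : ℝ) : ℂ) := by
    rw [mul_vecMulVec, trace_vecMulVec, exp_mulVec_of_mulVec_eq_smul hγO, smul_dotProduct,
      dotProduct_comm, hv, smul_eq_mul, mul_one, Complex.exp_eq_exp_ℂ]
  rw [htrace, ← Complex.ofReal_exp, Complex.ofReal_re, Real.log_exp]
  field_simp

/-- **The quantum tilted loss attains the ground-state energy at a ground state.** Let `O` be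
Hermitian with smallest eigenvalue `o_min = ⨅ i, λ i`, and let `v` be a unit vector with
`O · v = o_min • v`. Then for the pure density matrix `ρ★ = v·v†` and every real `γ ≠ 0`,
`(1/γ)·log (Re Tr (exp (γ • O) * ρ★)) = o_min`. -/
theorem qtl_attains_min_at_ground_state (n : ℕ) (hn : 0 < n)
    (O : Matrix (Fin n) (Fin n) ℂ) (hO : O.IsHermitian)
    (v : Fin n → ℂ) (hv : star v ⬝ᵥ v = 1)
    (heig : O.mulVec v = ((⨅ i, hO.eigenvalues i : ℝ) : ℂ) • v)
    (γ : ℝ) (hγ : γ ≠ 0) :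
    (1 / γ) * Real.log ((exp (γ • O) * vecMulVec v (star v)).trace.re)
      = ⨅ i, hO.eigenvalues i :=
  qtl_attains_min_at_ground_state_general n O hO v hv heig γ hγ
end

section
/- Let (Ω, μ) be a probability space, X : Ω → ℝ a measurable function such that exp(γ·X) is integrable and X is integrable on A, where γ < 0 is a real number and A ⊆ Ω is a measurable set with μ(A) = α for some α ∈ (0, 1]. Then (1/α)·∫_A X dμ ≥ (1/γ)·log(∫_Ω exp(γ·X) dμ) + (1/γ)·log(1/α). In particular, applying this to the lower-tail event of probability α yields the bound CVaR_α(X) ≥ L_γ(X) + (1/γ)·log(1/α) relating the lower-tail conditional value-at-risk to the tilted loss. -/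
/-!
Jensen's inequality for `exp` on `A` gives `exp (γ · avg_A X) ≤ avg_A exp (γ X) ≤ (1/α) E[exp (γ X)]`,
using only that `exp (γ X)` is positive off `A`. Taking logarithms and dividing by `γ < 0` flips
the inequality into the claimed lower bound on the conditional average.
-/

open MeasureTheory Real

theorem setAverage_le_log_integral_exp {Ω : Type*} [MeasurableSpace Ω] {μ : Measure Ω}
    {s : Set Ω} {f : Ω → ℝ} (hs0 : μ s ≠ 0) (hsTop : μ s ≠ ⊤) (hfs : IntegrableOn f s μ)
    (hexp : Integrable (fun ω => exp (f ω)) μ) :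
    ⨍ ω in s, f ω ∂μ ≤ log ((μ.real s)⁻¹ * ∫ ω, exp (f ω) ∂μ) := by
  have hjensen : exp (⨍ ω in s, f ω ∂μ) ≤ ⨍ ω in s, exp (f ω) ∂μ :=
    convexOn_exp.map_set_average_le continuousOn_exp isClosed_univ hs0 hsTop
      (.of_forall fun _ => Set.mem_univ _) hfs hexp.integrableOn
  have hrestrict : ⨍ ω in s, exp (f ω) ∂μ ≤ (μ.real s)⁻¹ * ∫ ω, exp (f ω) ∂μ := by
    rw [setAverage_eq, smul_eq_mul]
    exact mul_le_mul_of_nonneg_left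
      (setIntegral_le_integral hexp (.of_forall fun _ => (exp_pos _).le)) (by positivity)
  have key := hjensen.trans hrestrict
  exact (le_log_iff_exp_le ((exp_pos _).trans_le key)).2 key

theorem cvar_ge_tilted_loss_general
    {Ω : Type*} [MeasurableSpace Ω] (μ : Measure Ω) [IsProbabilityMeasure μ]
    (X : Ω → ℝ)
    (γ : ℝ) (hγ : γ < 0)
    (hint : Integrable (fun ω => Real.exp (γ * X ω)) μ)
    (A : Set Ω)
    (α : ℝ) (hα0 : 0 < α)
    (hμA : μ A = ENNReal.ofReal α)
    (hXA : IntegrableOn X A μ) :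
    (1 / γ) * Real.log (∫ ω, Real.exp (γ * X ω) ∂μ)
        + (1 / γ) * Real.log (1 / α)
      ≤ (1 / α) * ∫ ω in A, X ω ∂μ := by
  have hμA0 : μ A ≠ 0 := by simpa [hμA] using hα0
  have hμAreal : μ.real A = α := by rw [measureReal_def, hμA, ENNReal.toReal_ofReal hα0.le]
  have hbound := setAverage_le_log_integral_exp hμA0 (by simp [hμA]) (hXA.const_mul γ) hint
  have hIpos : 0 < ∫ ω, exp (γ * X ω) ∂μ := integral_exp_pos hint
  rw [setAverage_eq, hμAreal, smul_eq_mul, integral_const_mul,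
    log_mul (inv_pos.2 hα0).ne' hIpos.ne', ← one_div] at hbound
  calc (1 / γ) * log (∫ ω, exp (γ * X ω) ∂μ) + (1 / γ) * log (1 / α)
      = (1 / γ) * (log (1 / α) + log (∫ ω, exp (γ * X ω) ∂μ)) := by ring
    _ ≤ (1 / γ) * ((1 / α) * (γ * ∫ ω in A, X ω ∂μ)) :=
      mul_le_mul_of_nonpos_left hbound (one_div_neg.2 hγ).le
    _ = (1 / α) * ∫ ω in A, X ω ∂μ := by field_simp [hγ.ne]

/-- **Entropic lower bound for conditional averages (CVaR vs. tilted loss).** On a probability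
space `(Ω, μ)`, for `γ < 0`, a measurable `X` with `exp (γ·X)` integrable, and a measurable
set `A` of probability `α ∈ (0, 1]` on which `X` is integrable,
`(1/α)·∫_A X dμ ≥ (1/γ)·log (∫ exp (γ·X) dμ) + (1/γ)·log (1/α)`. -/
theorem cvar_ge_tilted_loss
    {Ω : Type*} [MeasurableSpace Ω] (μ : Measure Ω) [IsProbabilityMeasure μ]
    (X : Ω → ℝ) (hX : Measurable X)
    (γ : ℝ) (hγ : γ < 0)
    (hint : Integrable (fun ω => Real.exp (γ * X ω)) μ)
    (A : Set Ω) (hA : MeasurableSet A)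
    (α : ℝ) (hα0 : 0 < α) (hα1 : α ≤ 1)
    (hμA : μ A = ENNReal.ofReal α)
    (hXA : IntegrableOn X A μ) :
    (1 / γ) * Real.log (∫ ω, Real.exp (γ * X ω) ∂μ)
        + (1 / γ) * Real.log (1 / α)
      ≤ (1 / α) * ∫ ω in A, X ω ∂μ :=
  cvar_ge_tilted_loss_general μ X γ hγ hint A α hα0 hμA hXA
end

section
/- Let ι be a finite nonempty index set, p : ι → ℝ a probability vector, E : ι → ℝ, and i₀ ∈ ι with E(i₀) = min_i E(i) and p(i₀) > 0. Fix α with 0 < α ≤ p(i₀). For γ < 0 define f(γ) = (1/γ)·log(Σ_i p_i·exp(γ·E_i)) + (1/γ)·log(1/α). Then E(i₀) is the least upper bound of the set {f(γ) : γ < 0}; that is, f(γ) ≤ E(i₀) for all γ < 0, f(γ) → E(i₀) as γ → −∞, and sup_{γ<0} f(γ) = E(i₀). -/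
open Finset Filter Real

/-! For `γ < 0` the tilted sum `S(γ) = Σ pᵢ exp(γ Eᵢ)` is squeezed between its `i₀`-term, which is
at least `α exp(γ E i₀)`, and `exp(γ E i₀)`, because every `exp(γ Eᵢ)` is at most `exp(γ E i₀)`.
Taking `(1/γ) log` reverses both inequalities: `f(γ) ≤ E i₀ ≤ f(γ) - (1/γ) log(1/α)`, and the
gap `(1/γ) log(1/α)` vanishes as `γ → -∞`. -/

section TiltedSum

variable {ι : Type*} [Fintype ι] (p E : ι → ℝ)

theorem mul_exp_le_sum_mul_exp (hp : ∀ i, 0 ≤ p i) {i₀ : ι} {α : ℝ} (hα : α ≤ p i₀) (γ : ℝ) :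
    α * exp (γ * E i₀) ≤ ∑ i, p i * exp (γ * E i) :=
  (mul_le_mul_of_nonneg_right hα (exp_pos _).le).trans <|
    single_le_sum (f := fun i => p i * exp (γ * E i))
      (fun i _ => mul_nonneg (hp i) (exp_pos _).le) (mem_univ i₀)

theorem sum_mul_exp_le_exp_of_nonpos (hp : ∀ i, 0 ≤ p i) (hp1 : ∑ i, p i = 1) {i₀ : ι}
    (hmin : ∀ i, E i₀ ≤ E i) {γ : ℝ} (hγ : γ ≤ 0) :
    ∑ i, p i * exp (γ * E i) ≤ exp (γ * E i₀) :=
  calc ∑ i, p i * exp (γ * E i) ≤ ∑ i, p i * exp (γ * E i₀) :=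
        sum_le_sum fun i _ =>
          mul_le_mul_of_nonneg_left (exp_le_exp.mpr (mul_le_mul_of_nonpos_left (hmin i) hγ)) (hp i)
    _ = exp (γ * E i₀) := by rw [← sum_mul, hp1, one_mul]

end TiltedSum

section NegativeScale

variable {γ m S : ℝ}

theorem one_div_mul_log_add_log_le (hγ : γ < 0) {α : ℝ} (hα : 0 < α)
    (h : α * exp (γ * m) ≤ S) : 1 / γ * log S + 1 / γ * log (1 / α) ≤ m := by
  have hS : 0 < S := (mul_pos hα (exp_pos _)).trans_le h
  have hlog : γ * m ≤ log S + log (1 / α) := by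
    rw [← log_mul hS.ne' (by positivity), ← log_exp (γ * m)]
    exact log_le_log (exp_pos _) (by rwa [mul_one_div, le_div_iff₀' hα])
  rw [← mul_add, one_div_mul_eq_div, div_le_iff_of_neg hγ]
  linarith

theorem le_one_div_mul_log (hγ : γ < 0) (hS : 0 < S) (h : S ≤ exp (γ * m)) :
    m ≤ 1 / γ * log S := by
  rw [one_div_mul_eq_div, le_div_iff_of_neg hγ, mul_comm, ← log_exp (γ * m)]
  exact log_le_log hS h

end NegativeScale

theorem entropic_cvar_bound_tight_general
    {ι : Type*} [Fintype ι]
    (p : ι → ℝ) (hp : ∀ i, 0 ≤ p i) (hp1 : ∑ i, p i = 1)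
    (E : ι → ℝ) (i₀ : ι) (hmin : ∀ i, E i₀ ≤ E i)
    (α : ℝ) (hα0 : 0 < α) (hα : α ≤ p i₀) :
    (∀ γ : ℝ, γ < 0 →
        (1 / γ) * Real.log (∑ i, p i * Real.exp (γ * E i)) + (1 / γ) * Real.log (1 / α)
          ≤ E i₀) ∧
    Tendsto (fun γ : ℝ =>
        (1 / γ) * Real.log (∑ i, p i * Real.exp (γ * E i)) + (1 / γ) * Real.log (1 / α))
      atBot (nhds (E i₀)) ∧
    IsLUB {y : ℝ | ∃ γ : ℝ, γ < 0 ∧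
        y = (1 / γ) * Real.log (∑ i, p i * Real.exp (γ * E i)) + (1 / γ) * Real.log (1 / α)}
      (E i₀) := by
  set f : ℝ → ℝ := fun γ =>
    (1 / γ) * log (∑ i, p i * exp (γ * E i)) + (1 / γ) * log (1 / α)
  have hlower := mul_exp_le_sum_mul_exp p E hp hα
  have hupper (γ : ℝ) (hγ : γ < 0) : f γ ≤ E i₀ :=
    one_div_mul_log_add_log_le hγ hα0 (hlower γ)
  have hgap (γ : ℝ) (hγ : γ < 0) : E i₀ + 1 / γ * log (1 / α) ≤ f γ :=
    add_le_add_left (le_one_div_mul_log hγ ((mul_pos hα0 (exp_pos _)).trans_le (hlower γ))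
      (sum_mul_exp_le_exp_of_nonpos p E hp hp1 hmin hγ.le)) _
  have hgap_tendsto : Tendsto (fun γ : ℝ => E i₀ + 1 / γ * log (1 / α)) atBot (nhds (E i₀)) := by
    simpa only [one_div, zero_mul, add_zero] using
      tendsto_const_nhds.add (tendsto_inv_atBot_zero.mul_const (log (1 / α)))
  have hneg : ∀ᶠ γ : ℝ in atBot, γ < 0 := eventually_lt_atBot 0
  have htendsto : Tendsto f atBot (nhds (E i₀)) :=
    tendsto_of_tendsto_of_tendsto_of_le_of_le' hgap_tendsto tendsto_const_nhds
      (hneg.mono hgap) (hneg.mono hupper)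
  refine ⟨hupper, htendsto, isLUB_of_mem_closure ?_ ?_⟩
  · rintro y ⟨γ, hγ, rfl⟩
    exact hupper γ hγ
  · exact mem_closure_of_tendsto htendsto (hneg.mono fun γ hγ => ⟨γ, hγ, rfl⟩)

/-- **Tightness of the entropic CVaR bound.** For a probability vector `p`, energies `E`, a
minimizer `i₀` with `p i₀ > 0`, and a level `0 < α ≤ p i₀`, the entropic bound
`f(γ) = (1/γ)·log (Σ p i · exp (γ E i)) + (1/γ)·log (1/α)` satisfies `f(γ) ≤ E i₀` for all
`γ < 0`, tends to `E i₀` as `γ → −∞`, and has `E i₀` as least upper bound over `γ < 0`. -/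
theorem entropic_cvar_bound_tight
    {ι : Type*} [Fintype ι] [Nonempty ι]
    (p : ι → ℝ) (hp : ∀ i, 0 ≤ p i) (hp1 : ∑ i, p i = 1)
    (E : ι → ℝ) (i₀ : ι) (hmin : ∀ i, E i₀ ≤ E i) (hpos : 0 < p i₀)
    (α : ℝ) (hα0 : 0 < α) (hα : α ≤ p i₀) :
    (∀ γ : ℝ, γ < 0 →
        (1 / γ) * Real.log (∑ i, p i * Real.exp (γ * E i)) + (1 / γ) * Real.log (1 / α)
          ≤ E i₀) ∧
    Tendsto (fun γ : ℝ =>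
        (1 / γ) * Real.log (∑ i, p i * Real.exp (γ * E i)) + (1 / γ) * Real.log (1 / α))
      atBot (nhds (E i₀)) ∧
    IsLUB {y : ℝ | ∃ γ : ℝ, γ < 0 ∧
        y = (1 / γ) * Real.log (∑ i, p i * Real.exp (γ * E i)) + (1 / γ) * Real.log (1 / α)}
      (E i₀) :=
  entropic_cvar_bound_tight_general p hp hp1 E i₀ hmin α hα0 hα
end

section
/- Let K ≥ 1 be an integer, E : Fin K → ℝ a family of real energy samples, α ∈ (0, 1), γ < 0, and m = ⌈α·K⌉. Then for every subset S of Fin K with cardinality m, (1/m)·Σ_{i ∈ S} E(i) ≥ (1/γ)·log((1/K)·Σ_{k} exp(γ·E(k))) + (1/γ)·log(1/α). In particular, taking S to be the indices of the m smallest samples, the empirical lower-tail CVaR estimator at level α is bounded below by the empirical tilted loss plus the correction term (1/γ)·log(1/α). -/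
open Finset

/-- **Empirical lower-tail CVaR vs. empirical tilted loss.** Given `K ≥ 1` energy samples
`E : Fin K → ℝ`, a level `α ∈ (0,1)`, a tilt `γ < 0`, and `m = ⌈α·K⌉`, every subset `S` of
cardinality `m` satisfies
`(1/m)·Σ_{i∈S} E i ≥ (1/γ)·log ((1/K)·Σ_k exp (γ E k)) + (1/γ)·log (1/α)`. -/
theorem empirical_cvar_ge_empirical_tilted_loss
    (K : ℕ) (hK : 1 ≤ K) (E : Fin K → ℝ)
    (α : ℝ) (hα0 : 0 < α) (hα1 : α < 1)
    (γ : ℝ) (hγ : γ < 0)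
    (m : ℕ) (hm : m = ⌈α * (K : ℝ)⌉₊)
    (S : Finset (Fin K)) (hS : S.card = m) :
    (1 / γ) * Real.log ((1 / (K : ℝ)) * ∑ k, Real.exp (γ * E k))
        + (1 / γ) * Real.log (1 / α)
      ≤ (1 / (m : ℝ)) * ∑ i ∈ S, E i := by
  have hKpos : (0:ℝ) < K := by exact_mod_cast hK
  have hαK : (0:ℝ) < α * K := mul_pos hα0 hKpos
  have hm1 : 1 ≤ m := by
    rw [hm]
    exact Nat.one_le_ceil_iff.2 hαK
  have hmpos : (0:ℝ) < m := by exact_mod_cast hm1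
  have hαKm : α * K ≤ m := by rw [hm]; exact Nat.le_ceil _
  -- Jensen: exp(avg) ≤ avg of exp
  have hjensen : Real.exp (γ * ((1 / (m:ℝ)) * ∑ i ∈ S, E i))
      ≤ (1 / (m:ℝ)) * ∑ i ∈ S, Real.exp (γ * E i) := by
    have hw : ∀ i ∈ S, (0:ℝ) ≤ 1 / (m:ℝ) := fun i _ => by positivity
    have hw1 : ∑ _i ∈ S, (1 / (m:ℝ)) = 1 := by
      rw [Finset.sum_const, hS, nsmul_eq_mul]
      field_simp
    have h := convexOn_exp.map_sum_le (w := fun _ => 1 / (m:ℝ)) (p := fun i => γ * E i)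
      hw hw1 (fun i _ => Set.mem_univ _)
    simp only [smul_eq_mul] at h
    have hL : ∑ x ∈ S, 1 / (m:ℝ) * (γ * E x) = γ * ((1 / (m:ℝ)) * ∑ i ∈ S, E i) := by
      rw [Finset.mul_sum, Finset.mul_sum]
      exact Finset.sum_congr rfl fun i _ => by ring
    have hR : ∑ x ∈ S, 1 / (m:ℝ) * Real.exp (γ * E x)
        = (1 / (m:ℝ)) * ∑ i ∈ S, Real.exp (γ * E i) := by
      rw [Finset.mul_sum]
    rwa [hL, hR] at h
  have hsum_le : ∑ i ∈ S, Real.exp (γ * E i) ≤ ∑ k, Real.exp (γ * E k) :=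
    Finset.sum_le_sum_of_subset_of_nonneg (Finset.subset_univ S)
      (fun i _ _ => (Real.exp_pos _).le)
  have hsum_pos : (0:ℝ) < ∑ k, Real.exp (γ * E k) := by
    apply Finset.sum_pos (fun i _ => Real.exp_pos _)
    exact Finset.univ_nonempty_iff.2 ⟨⟨0, hK⟩⟩
  have hstep : Real.exp (γ * ((1 / (m:ℝ)) * ∑ i ∈ S, E i))
      ≤ (1 / α) * ((1 / (K:ℝ)) * ∑ k, Real.exp (γ * E k)) := by
    calc Real.exp (γ * ((1 / (m:ℝ)) * ∑ i ∈ S, E i))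
        ≤ (1 / (m:ℝ)) * ∑ i ∈ S, Real.exp (γ * E i) := hjensen
      _ ≤ (1 / (m:ℝ)) * ∑ k, Real.exp (γ * E k) := by
          apply mul_le_mul_of_nonneg_left hsum_le (by positivity)
      _ ≤ (1 / (α * K)) * ∑ k, Real.exp (γ * E k) := by
          apply mul_le_mul_of_nonneg_right _ hsum_pos.le
          exact one_div_le_one_div_of_le hαK hαKm
      _ = (1 / α) * ((1 / (K:ℝ)) * ∑ k, Real.exp (γ * E k)) := by
          field_simp
  have hlog : γ * ((1 / (m:ℝ)) * ∑ i ∈ S, E i)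
      ≤ Real.log ((1 / (K:ℝ)) * ∑ k, Real.exp (γ * E k)) + Real.log (1 / α) := by
    have h1 : γ * ((1 / (m:ℝ)) * ∑ i ∈ S, E i)
        ≤ Real.log ((1 / α) * ((1 / (K:ℝ)) * ∑ k, Real.exp (γ * E k))) := by
      rw [← Real.log_exp (γ * ((1 / (m:ℝ)) * ∑ i ∈ S, E i))]
      exact Real.log_le_log (Real.exp_pos _) hstep
    rwa [Real.log_mul (by positivity) (by positivity), add_comm] at h1
  have hγ' : 1 / γ < 0 := one_div_neg.2 hγ
  have := mul_le_mul_of_nonpos_left hlog hγ'.le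
  calc (1 / γ) * Real.log ((1 / (K:ℝ)) * ∑ k, Real.exp (γ * E k))
        + (1 / γ) * Real.log (1 / α)
      = (1 / γ) * (Real.log ((1 / (K:ℝ)) * ∑ k, Real.exp (γ * E k)) + Real.log (1 / α)) := by
        ring
    _ ≤ (1 / γ) * (γ * ((1 / (m:ℝ)) * ∑ i ∈ S, E i)) := this
    _ = (1 / (m:ℝ)) * ∑ i ∈ S, E i := by
        rw [← mul_assoc, one_div_mul_cancel hγ.ne, one_mul]
end

section
/- Let (Ω, μ) be a probability space and X : Fin m → Ω → ℝ independent, identically distributed random variables (i.e., the family is independent and each X_i has the same distribution as X_0), with λ_min ≤ X_i(ω) ≤ λ_max for all i and ω; set Δ = λ_max − λ_min. Fix γ ≠ 0, δ ∈ (0,1), and ε > 0 with ε ≤ 1/|γ|. If m ≥ (2/(γ²·ε²))·(exp(|γ|·Δ) − 1)²·log(2/δ), then with probability at least 1 − δ the empirical tilted loss is ε-accurate: μ{ω : |(1/γ)·log((1/m)·Σ_{i} exp(γ·X_i(ω))) − (1/γ)·log(E[exp(γ·X_0)])| ≤ ε} ≥ 1 − δ. -/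
/-! The variables `Z i = exp (γ * X i)` take values in `[a, a * K]` with `a > 0` and
`K = exp (|γ| * (λmax - λmin))`. By Hoeffding's inequality, their empirical mean deviates from
`A = E[Z 0]` by at least `|γ| * ε * a` with probability at most
`2 * exp (-2 * m * γ² * ε² / (K - 1)²) ≤ δ`. Outside this event both the empirical mean and `A`
are at least `a`, where `log` is `1/a`-Lipschitz, so the two tilted losses differ by at most `ε`. -/

open MeasureTheory ProbabilityTheory Real

lemma Real.exp_mul_mem_Icc {γ l u x : ℝ} (hx : x ∈ Set.Icc l u) :
    exp (γ * x) ∈ Set.Icc (exp (min (γ * l) (γ * u)))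
      (exp (min (γ * l) (γ * u)) * exp (|γ| * (u - l))) := by
  rw [← exp_add]
  suffices γ * x ∈ Set.Icc (min (γ * l) (γ * u)) (min (γ * l) (γ * u) + |γ| * (u - l)) from
    ⟨exp_le_exp.2 this.1, exp_le_exp.2 this.2⟩
  obtain ⟨hl, hu⟩ := hx
  rcases le_total 0 γ with hγ | hγ
  · rw [min_eq_left (by nlinarith), abs_of_nonneg hγ]
    constructor <;> nlinarith
  · rw [min_eq_right (by nlinarith), abs_of_nonpos hγ]
    constructor <;> nlinarith

lemma Real.abs_log_sub_log_le {a x y : ℝ} (ha : 0 < a) (hx : a ≤ x) (hy : a ≤ y) :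
    |log x - log y| ≤ |x - y| / a := by
  wlog hyx : y ≤ x generalizing x y
  · rw [abs_sub_comm, abs_sub_comm x]
    exact this hy hx (le_of_not_ge hyx)
  have hy0 : 0 < y := ha.trans_le hy
  have hx0 : 0 < x := hy0.trans_le hyx
  calc |log x - log y| = log (x / y) := by
        rw [abs_of_nonneg (sub_nonneg.2 (log_le_log hy0 hyx)), log_div hx0.ne' hy0.ne']
    _ ≤ x / y - 1 := log_le_sub_one_of_pos (by positivity)
    _ = |x - y| / y := by rw [abs_of_nonneg (sub_nonneg.2 hyx)]; field_simp
    _ ≤ |x - y| / a := div_le_div_of_nonneg_left (abs_nonneg _) ha hy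

lemma abs_one_div_mul_log_sub_le {γ ε a x y : ℝ} (hγ : γ ≠ 0) (ha : 0 < a) (hx : a ≤ x)
    (hy : a ≤ y) (hxy : |x - y| ≤ |γ| * ε * a) :
    |1 / γ * log x - 1 / γ * log y| ≤ ε := by
  have hγ' : 0 < |γ| := abs_pos.2 hγ
  calc |1 / γ * log x - 1 / γ * log y| = |log x - log y| / |γ| := by
        rw [← mul_sub, abs_mul, abs_div, abs_one, one_div_mul_eq_div]
    _ ≤ |x - y| / a / |γ| := by gcongr; exact abs_log_sub_log_le ha hx hy
    _ ≤ ε := by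
        rw [div_div, div_le_iff₀ (by positivity)]
        linarith

lemma abs_one_div_mul_log_mean_sub_le {n : ℕ} (hn : 0 < n) {γ ε a A : ℝ} {z : Fin n → ℝ}
    (hγ : γ ≠ 0) (ha : 0 < a) (hz : ∀ i, a ≤ z i) (hA : a ≤ A)
    (hzA : |∑ i, (z i - A)| ≤ n * (|γ| * ε * a)) :
    |1 / γ * log (1 / n * ∑ i, z i) - 1 / γ * log A| ≤ ε := by
  have hn' : (0 : ℝ) < n := Nat.cast_pos.2 hn
  have hmean : a ≤ 1 / n * ∑ i, z i := by
    have := Finset.card_nsmul_le_sum Finset.univ z a (fun i _ ↦ hz i)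
    rw [Finset.card_univ, Fintype.card_fin, nsmul_eq_mul] at this
    rw [one_div_mul_eq_div, le_div_iff₀ hn']
    linarith
  refine abs_one_div_mul_log_sub_le hγ ha hmean hA ?_
  have : 1 / n * ∑ i, z i - A = 1 / n * ∑ i, (z i - A) := by
    rw [Finset.sum_sub_distrib, Finset.sum_const, Finset.card_univ, Fintype.card_fin,
      nsmul_eq_mul]
    field_simp
  rw [this, abs_mul, abs_of_pos (by positivity), one_div_mul_eq_div, div_le_iff₀ hn']
  linarith

lemma two_mul_exp_neg_le_of_sample_bound {m q K δ : ℝ} (hm : 0 ≤ m) (hq : 0 < q) (hK : 1 < K)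
    (hδ : 0 < δ) (h : m ≥ 2 / q * (K - 1) ^ 2 * log (2 / δ)) :
    2 * exp (-(2 * m * q / (K - 1) ^ 2)) ≤ δ := by
  have hK' : 0 < (K - 1) ^ 2 := by nlinarith
  have hfour : 4 * log (2 / δ) ≤ 2 * m * q / (K - 1) ^ 2 := by
    rw [ge_iff_le, div_mul_eq_mul_div, div_mul_eq_mul_div, div_le_iff₀ hq] at h
    rw [le_div_iff₀ hK']
    linarith
  have hlog : log (2 / δ) ≤ 2 * m * q / (K - 1) ^ 2 := by
    have : 0 ≤ 2 * m * q / (K - 1) ^ 2 := by positivity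
    rcases le_total 0 (log (2 / δ)) with hL | hL <;> linarith
  calc 2 * exp (-(2 * m * q / (K - 1) ^ 2)) ≤ 2 * exp (-log (2 / δ)) := by gcongr
    _ = δ := by rw [exp_neg, exp_log (by positivity)]; field_simp

section Concentration

variable {Ω ι : Type*} [MeasurableSpace Ω] {μ : Measure Ω} [IsProbabilityMeasure μ] [Fintype ι]

lemma MeasureTheory.ofReal_one_sub_le_measure_of_measureReal_compl_le {s : Set Ω} {δ : ℝ} (hδ : 0 ≤ δ)
    (h : μ.real sᶜ ≤ δ) : ENNReal.ofReal (1 - δ) ≤ μ s := by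
  have hcompl : μ sᶜ ≤ ENNReal.ofReal δ := by
    rwa [ENNReal.le_ofReal_iff_toReal_le (measure_ne_top μ _) hδ]
  calc ENNReal.ofReal (1 - δ) = 1 - ENNReal.ofReal δ := by
        rw [ENNReal.ofReal_sub _ hδ, ENNReal.ofReal_one]
    _ ≤ 1 - μ sᶜ := by gcongr
    _ ≤ μ s := by
        rw [tsub_le_iff_right, ← measure_univ (μ := μ)]
        exact measure_univ_le_add_compl s

lemma ProbabilityTheory.measureReal_abs_sum_sub_integral_ge_le {Z : ι → Ω → ℝ}
    (hmeas : ∀ i, AEMeasurable (Z i) μ) (hindep : iIndepFun Z μ) {a b : ℝ}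
    (hab : ∀ i, ∀ᵐ ω ∂μ, Z i ω ∈ Set.Icc a b) {t : ℝ} (ht : 0 ≤ t) :
    μ.real {ω | t ≤ |∑ i, (Z i ω - μ[Z i])|}
      ≤ 2 * exp (-2 * t ^ 2 / (Fintype.card ι * (b - a) ^ 2)) := by
  set Y : ι → Ω → ℝ := fun i ω ↦ Z i ω - μ[Z i]
  have hY : iIndepFun Y μ := (hindep.comp (fun i (y : ℝ) ↦ y - μ[Z i]) fun _ ↦ by fun_prop :)
  have hYsub : ∀ i ∈ Finset.univ, HasSubgaussianMGF (Y i) ((‖b - a‖₊ / 2) ^ 2) μ :=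
    fun i _ ↦ hasSubgaussianMGF_of_mem_Icc (hmeas i) (hab i)
  have hupper := HasSubgaussianMGF.measure_sum_ge_le_of_iIndepFun hY hYsub ht
  have hlower := HasSubgaussianMGF.measure_sum_ge_le_of_iIndepFun
    (hY.comp (fun _ (y : ℝ) ↦ -y) fun _ ↦ by fun_prop) (fun i hi ↦ (hYsub i hi).neg) ht
  have hexp : exp (-t ^ 2 / (2 * ((∑ _i : ι, (‖b - a‖₊ / 2) ^ 2 : NNReal) : ℝ)))
      = exp (-2 * t ^ 2 / (Fintype.card ι * (b - a) ^ 2)) := by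
    push_cast
    simp only [Finset.sum_const, Finset.card_univ, nsmul_eq_mul, norm_eq_abs, div_pow, sq_abs]
    rw [show (2 : ℝ) * (Fintype.card ι * ((b - a) ^ 2 / 2 ^ 2)) = Fintype.card ι * (b - a) ^ 2 / 2
      by ring, div_div_eq_mul_div]
    ring_nf
  have hcover : {ω | t ≤ |∑ i, (Z i ω - μ[Z i])|}
      ⊆ {ω | t ≤ ∑ i, Y i ω} ∪ {ω | t ≤ ∑ i, ((fun x ↦ -x) ∘ Y i) ω} := by
    rintro ω (hω : t ≤ _)
    simpa [Y] using le_abs.1 hω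
  calc μ.real {ω | t ≤ |∑ i, (Z i ω - μ[Z i])|}
      ≤ μ.real ({ω | t ≤ ∑ i, Y i ω} ∪ {ω | t ≤ ∑ i, ((fun x ↦ -x) ∘ Y i) ω}) :=
        measureReal_mono hcover
    _ ≤ μ.real {ω | t ≤ ∑ i, Y i ω} + μ.real {ω | t ≤ ∑ i, ((fun x ↦ -x) ∘ Y i) ω} :=
        measureReal_union_le _ _
    _ ≤ 2 * exp (-2 * t ^ 2 / (Fintype.card ι * (b - a) ^ 2)) := by linarith

lemma ProbabilityTheory.measureReal_abs_sum_sub_ge_le_of_mem_Icc_mul {n : ℕ}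
    {Z : Fin n → Ω → ℝ} (hmeas : ∀ i, AEMeasurable (Z i) μ) (hindep : iIndepFun Z μ)
    {a K A r : ℝ} (ha : 0 < a) (hK : 1 < K) (hZ : ∀ i, ∀ᵐ ω ∂μ, Z i ω ∈ Set.Icc a (a * K))
    (hA : ∀ i, μ[Z i] = A) (hr : 0 ≤ r) :
    μ.real {ω | n * (r * a) ≤ |∑ i, (Z i ω - A)|} ≤ 2 * exp (-(2 * n * r ^ 2 / (K - 1) ^ 2)) := by
  have hoeffding := measureReal_abs_sum_sub_integral_ge_le hmeas hindep hZ (t := n * (r * a))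
    (by positivity)
  have hexponent : -2 * (n * (r * a)) ^ 2 / (n * (a * K - a) ^ 2)
      = -(2 * n * r ^ 2 / (K - 1) ^ 2) := by
    have : K - 1 ≠ 0 := by linarith
    field_simp
  simpa only [hA, Fintype.card_fin, hexponent] using hoeffding

lemma ProbabilityTheory.measureReal_abs_sum_sub_ge_le_of_sample_bound {n : ℕ} (hn : 0 < n)
    {Z : Fin n → Ω → ℝ} (hmeas : ∀ i, AEMeasurable (Z i) μ) (hindep : iIndepFun Z μ)
    {a K A r δ : ℝ} (ha : 0 < a) (hZ : ∀ i ω, Z i ω ∈ Set.Icc a (a * K)) (hA : ∀ i, μ[Z i] = A)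
    (hr : 0 < r) (hδ : 0 < δ) (hsamples : (n : ℝ) ≥ 2 / r ^ 2 * (K - 1) ^ 2 * log (2 / δ)) :
    μ.real {ω | n * (r * a) ≤ |∑ i, (Z i ω - A)|} ≤ δ := by
  rcases lt_or_ge 1 K with hK | hK
  · calc _ ≤ 2 * exp (-(2 * n * r ^ 2 / (K - 1) ^ 2)) :=
          measureReal_abs_sum_sub_ge_le_of_mem_Icc_mul hmeas hindep ha hK
            (fun i ↦ ae_of_all _ (hZ i)) hA hr.le
      _ ≤ δ := two_mul_exp_neg_le_of_sample_bound (Nat.cast_nonneg n) (by positivity) hK hδ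
          hsamples
  have hZa : ∀ i ω, Z i ω = a := fun i ω ↦
    le_antisymm ((hZ i ω).2.trans (mul_le_of_le_one_right ha.le hK)) (hZ i ω).1
  have hAa : A = a := by simp [← hA ⟨0, hn⟩, hZa]
  have hempty : {ω | n * (r * a) ≤ |∑ i, (Z i ω - A)|} = ∅ := by
    ext ω
    simpa [hZa, hAa] using mul_pos (Nat.cast_pos.2 hn) (mul_pos hr ha)
  rw [hempty, measureReal_empty]
  exact hδ.le

end Concentration

theorem empirical_tilted_loss_sample_complexity_general
    {Ω : Type*} [MeasurableSpace Ω] (μ : Measure Ω) [IsProbabilityMeasure μ]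
    (m : ℕ) (hm0 : 0 < m) (X : Fin m → Ω → ℝ)
    (hmeas : ∀ i, Measurable (X i))
    (hindep : iIndepFun X μ)
    (hident : ∀ i, IdentDistrib (X i) (X ⟨0, hm0⟩) μ μ)
    (lammin lammax : ℝ)
    (hbound : ∀ i ω, X i ω ∈ Set.Icc lammin lammax)
    (γ : ℝ) (hγ : γ ≠ 0) (δ : ℝ) (hδ0 : 0 < δ)
    (ε : ℝ) (hε0 : 0 < ε)
    (hsamples : (m : ℝ) ≥
      2 / (γ ^ 2 * ε ^ 2) * (Real.exp (|γ| * (lammax - lammin)) - 1) ^ 2 *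
        Real.log (2 / δ)) :
    ENNReal.ofReal (1 - δ) ≤
      μ {ω | |(1 / γ) * Real.log ((1 / (m : ℝ)) * ∑ i, Real.exp (γ * X i ω))
          - (1 / γ) * Real.log (∫ ω', Real.exp (γ * X ⟨0, hm0⟩ ω') ∂μ)| ≤ ε} := by
  set E := exp (|γ| * (lammax - lammin))
  set a := exp (min (γ * lammin) (γ * lammax))
  have ha : 0 < a := exp_pos _
  have hZ : ∀ i ω, exp (γ * X i ω) ∈ Set.Icc a (a * E) := fun i ω ↦ exp_mul_mem_Icc (hbound i ω)
  set A := ∫ ω', exp (γ * X ⟨0, hm0⟩ ω') ∂μ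
  have hmean : ∀ i, μ[fun ω ↦ exp (γ * X i ω)] = A := fun i ↦
    ((hident i).comp (show Measurable fun x ↦ exp (γ * x) by fun_prop)).integral_eq
  have hA : a ≤ A := by
    calc a = ∫ _, a ∂μ := by simp
      _ ≤ A := integral_mono (integrable_const a)
        (.of_mem_Icc a (a * E) (by fun_prop) (ae_of_all _ (hZ _))) fun ω ↦ (hZ _ ω).1
  have hbad := measureReal_abs_sum_sub_ge_le_of_sample_bound hm0 (fun i ↦ by fun_prop)
    (hindep.comp (fun _ x ↦ exp (γ * x)) fun _ ↦ by fun_prop) ha hZ hmean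
    (r := |γ| * ε) (by positivity) hδ0 (by rwa [mul_pow, sq_abs])
  refine ofReal_one_sub_le_measure_of_measureReal_compl_le hδ0.le
    ((measureReal_mono fun ω hω ↦ ?_).trans hbad)
  by_contra hlt
  exact hω (abs_one_div_mul_log_mean_sub_le hm0 hγ ha (fun i ↦ (hZ i ω).1) hA (not_le.1 hlt).le)

/-- **Hoeffding-type sample complexity for the empirical tilted loss.** Let `X i`,
`i : Fin m`, be i.i.d. random variables with values in `[λmin, λmax]`, `Δ = λmax − λmin`,
`γ ≠ 0`, `δ ∈ (0,1)`, and `0 < ε ≤ 1/|γ|`. If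
`m ≥ (2/(γ²ε²))·(exp(|γ|Δ) − 1)²·log(2/δ)`, then with probability at least `1 − δ` the
empirical tilted loss is within `ε` of the true tilted loss. -/
theorem empirical_tilted_loss_sample_complexity
    {Ω : Type*} [MeasurableSpace Ω] (μ : Measure Ω) [IsProbabilityMeasure μ]
    (m : ℕ) (hm0 : 0 < m) (X : Fin m → Ω → ℝ)
    (hmeas : ∀ i, Measurable (X i))
    (hindep : iIndepFun X μ)
    (hident : ∀ i, IdentDistrib (X i) (X ⟨0, hm0⟩) μ μ)
    (lammin lammax : ℝ)
    (hbound : ∀ i ω, X i ω ∈ Set.Icc lammin lammax)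
    (γ : ℝ) (hγ : γ ≠ 0) (δ : ℝ) (hδ0 : 0 < δ) (hδ1 : δ < 1)
    (ε : ℝ) (hε0 : 0 < ε) (hε : ε ≤ 1 / |γ|)
    (hsamples : (m : ℝ) ≥
      2 / (γ ^ 2 * ε ^ 2) * (Real.exp (|γ| * (lammax - lammin)) - 1) ^ 2 *
        Real.log (2 / δ)) :
    ENNReal.ofReal (1 - δ) ≤
      μ {ω | |(1 / γ) * Real.log ((1 / (m : ℝ)) * ∑ i, Real.exp (γ * X i ω))
          - (1 / γ) * Real.log (∫ ω', Real.exp (γ * X ⟨0, hm0⟩ ω') ∂μ)| ≤ ε} :=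
  empirical_tilted_loss_sample_complexity_general μ m hm0 X hmeas hindep hident lammin lammax hbound
    γ hγ δ hδ0 ε hε0 hsamples
end

section
/- Let V be an n×n complex matrix and v > 0 a real number with V·V = v²·I_n, and let A, B be arbitrary n×n complex matrices. Define f : ℝ → ℂ by f(θ) = Tr(A · exp(−i·θ·V) · B · exp(i·θ·V)), where exp is the matrix exponential and i is the imaginary unit. Then f is differentiable and satisfies the exact parameter-shift rule: for every θ ∈ ℝ, f′(θ) = v·( f(θ + π/(4v)) − f(θ − π/(4v)) ). -/
/-!
Since `V² = v²`, the exponential series of `(θ i) V` splits into its even and odd parts, giving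
`exp (θ i V) = cos (v θ) + i sin (v θ) V / v`. Hence `f θ = a + b cos (2 v θ) + c sin (2 v θ)`.
Shifting `θ` by `± π / (4 v)` shifts the phase `2 v θ` by `± π / 2`, which turns `cos` into `∓ sin`
and `sin` into `± cos`, so `v (f (θ + π / (4 v)) - f (θ - π / (4 v)))` is exactly `f' θ`.
-/

open Matrix NormedSpace

section ExpOfSquareScalar

variable {𝔸 : Type*} [Ring 𝔸] [Algebra ℂ 𝔸] [TopologicalSpace 𝔸] [IsTopologicalRing 𝔸]
  [ContinuousSMul ℂ 𝔸] [T2Space 𝔸]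

theorem exp_mul_I_smul_eq_cos_add_sin_of_mul_self_eq {V : 𝔸} {w : ℂ} (hw : w ≠ 0)
    (hV : V * V = w ^ 2 • (1 : 𝔸)) (z : ℂ) :
    exp ((z * Complex.I) • V) =
      Complex.cos (w * z) • (1 : 𝔸) + (Complex.I * Complex.sin (w * z) / w) • V := by
  have pow_even (k : ℕ) : V ^ (2 * k) = w ^ (2 * k) • (1 : 𝔸) := by
    rw [pow_mul, sq, hV, smul_pow, one_pow, ← pow_mul]
  have pow_odd (k : ℕ) : V ^ (2 * k + 1) = w ^ (2 * k) • V := by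
    rw [pow_succ, pow_even, smul_mul_assoc, one_mul]
  rw [exp_eq_tsum ℂ]
  refine HasSum.tsum_eq (HasSum.even_add_odd ?_ ?_)
  · convert (Complex.hasSum_cos' (w * z)).smul_const (1 : 𝔸) using 2 with k
    rw [smul_pow, pow_even, smul_smul, smul_smul]
    congr 1
    ring
  · convert ((Complex.hasSum_sin' (w * z)).mul_left (Complex.I / w)).smul_const V using 1
    · funext k
      rw [smul_pow, pow_odd, smul_smul, smul_smul]
      congr 1
      field_simp
      ring
    · congr 1
      ring

end ExpOfSquareScalar

theorem Matrix.exists_trace_mul_exp_mul_exp_eq_trigPoly {m : Type*} [Fintype m] [DecidableEq m]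
    {V : Matrix m m ℂ} {v : ℝ} (hv : v ≠ 0) (hV : V * V = (v : ℂ) ^ 2 • (1 : Matrix m m ℂ))
    (A B : Matrix m m ℂ) :
    ∃ a b c : ℂ, ∀ θ : ℝ,
      (A * exp ((-(θ : ℂ) * Complex.I) • V) * B * exp (((θ : ℂ) * Complex.I) • V)).trace =
        a + b * Real.cos (2 * v * θ) + c * Real.sin (2 * v * θ) := by
  have hv' : (v : ℂ) ≠ 0 := by exact_mod_cast hv
  refine ⟨((A * B).trace + (A * V * B * V).trace / v ^ 2) / 2,
    ((A * B).trace - (A * V * B * V).trace / v ^ 2) / 2,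
    Complex.I * ((A * B * V).trace - (A * V * B).trace) / (2 * v), fun θ => ?_⟩
  rw [exp_mul_I_smul_eq_cos_add_sin_of_mul_self_eq hv' hV,
    exp_mul_I_smul_eq_cos_add_sin_of_mul_self_eq hv' hV, mul_neg, Complex.cos_neg,
    Complex.sin_neg]
  simp only [mul_add, add_mul, Matrix.mul_smul, Matrix.smul_mul, Matrix.mul_one,
    trace_add, trace_smul, smul_eq_mul, ← mul_assoc]
  push_cast
  rw [mul_assoc 2, Complex.cos_two_mul, Complex.sin_two_mul]
  field_simp
  linear_combination 2 * (A * V * B * V).trace * Complex.sin_sq_add_cos_sq (v * θ) -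
    2 * Complex.sin (v * θ) ^ 2 * (A * V * B * V).trace * Complex.I_sq

theorem hasDerivAt_eq_parameterShift_of_eq_trigPoly {g : ℝ → ℂ} {a b c : ℂ} {v : ℝ}
    (hv : v ≠ 0)
    (hg : ∀ θ, g θ = a + b * Real.cos (2 * v * θ) + c * Real.sin (2 * v * θ)) (θ : ℝ) :
    HasDerivAt g (v * (g (θ + Real.pi / (4 * v)) - g (θ - Real.pi / (4 * v)))) θ := by
  have hlin : HasDerivAt (fun θ : ℝ => 2 * v * θ) (2 * v) θ := by
    simpa using (hasDerivAt_id θ).const_mul (2 * v)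
  have hcos := ((Real.hasDerivAt_cos _).comp θ hlin).ofReal_comp
  have hsin := ((Real.hasDerivAt_sin _).comp θ hlin).ofReal_comp
  have hderiv : HasDerivAt g
      (b * ↑(-Real.sin (2 * v * θ) * (2 * v)) + c * ↑(Real.cos (2 * v * θ) * (2 * v))) θ := by
    rw [funext hg]
    exact ((hcos.const_mul b).const_add a).add (hsin.const_mul c)
  have hplus : 2 * v * (θ + Real.pi / (4 * v)) = 2 * v * θ + Real.pi / 2 := by
    field_simp
    ring
  have hminus : 2 * v * (θ - Real.pi / (4 * v)) = 2 * v * θ - Real.pi / 2 := by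
    field_simp
    ring
  convert hderiv using 1
  rw [hg, hg, hplus, hminus, Real.cos_add_pi_div_two, Real.sin_add_pi_div_two,
    Real.cos_sub_pi_div_two, Real.sin_sub_pi_div_two]
  push_cast
  ring

/-- **Exact parameter-shift rule.** Let `V` be an `n × n` complex matrix with `V·V = v²·I`
for some real `v > 0`, and let `A`, `B` be arbitrary `n × n` complex matrices. Then
`f(θ) = Tr (A · exp(−iθV) · B · exp(iθV))` is differentiable with
`f′(θ) = v·(f(θ + π/(4v)) − f(θ − π/(4v)))` for every `θ`. -/
theorem parameter_shift_rule (n : ℕ)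
    (V A B : Matrix (Fin n) (Fin n) ℂ)
    (v : ℝ) (hv : 0 < v)
    (hV : V * V = ((v : ℂ) ^ 2) • (1 : Matrix (Fin n) (Fin n) ℂ)) :
    ∀ θ : ℝ,
      HasDerivAt
        (fun θ : ℝ =>
          (A * exp ((-(θ : ℂ) * Complex.I) • V) * B *
            exp (((θ : ℂ) * Complex.I) • V)).trace)
        ((v : ℂ) *
          ((A * exp ((-(((θ + Real.pi / (4 * v)) : ℝ) : ℂ) * Complex.I) • V) * B *
              exp (((((θ + Real.pi / (4 * v)) : ℝ) : ℂ) * Complex.I) • V)).trace -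
           (A * exp ((-(((θ - Real.pi / (4 * v)) : ℝ) : ℂ) * Complex.I) • V) * B *
              exp (((((θ - Real.pi / (4 * v)) : ℝ) : ℂ) * Complex.I) • V)).trace))
        θ := by
  obtain ⟨a, b, c, htrig⟩ := exists_trace_mul_exp_mul_exp_eq_trigPoly hv.ne' hV A B
  exact hasDerivAt_eq_parameterShift_of_eq_trigPoly hv.ne' htrig
end

section
/- Let n ≥ 1 be an integer, k an index in Fin n, and let μ be the product over Fin n of the uniform probability measure on [−π, π] (i.e., (1/(2π))·Lebesgue restricted to [−π, π] in each coordinate). Define g : (Fin n → ℝ) → ℝ by g(θ) = (1/2)·sin(θ_k)·∏_{j ≠ k} cos²(θ_j/2). Then ∫ g dμ = 0 and ∫ g² dμ = (1/8)·(3/8)^{n−1}; that is, the random variable g has mean zero and variance exactly (1/8)·(3/8)^{n−1} under μ, which decays exponentially in n. -/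
open MeasureTheory Finset

/-!
The integrand is a product of functions of single coordinates, so by Fubini both moments factor
into one-dimensional integrals against the uniform law on `[-π, π]`: `sin` has mean `0`,
`(sin θ / 2)²` has mean `1/8`, and `cos⁴(θ/2) = (1 + cos θ)² / 4` has mean `3/8`.
-/

theorem integral_pi_mul_prod_erase_eq {ι E 𝕜 : Type*} [Fintype ι] [DecidableEq ι] [RCLike 𝕜]
    [MeasurableSpace E] (μ : Measure E) [SigmaFinite μ] (k : ι) (f g : E → 𝕜) :
    ∫ θ : ι → E, f (θ k) * ∏ j ∈ univ.erase k, g (θ j) ∂Measure.pi (fun _ => μ) =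
      (∫ x, f x ∂μ) * (∫ x, g x ∂μ) ^ (Fintype.card ι - 1) := by
  let h : ι → E → 𝕜 := Function.update (fun _ => g) k f
  have h_erase : ∀ j ∈ univ.erase k, h j = g := fun j hj =>
    Function.update_of_ne (ne_of_mem_erase hj) _ _
  have h_self : h k = f := Function.update_self _ _ _
  have hprod (θ : ι → E) : ∏ j, h j (θ j) = f (θ k) * ∏ j ∈ univ.erase k, g (θ j) := by
    rw [← mul_prod_erase univ _ (mem_univ k), h_self]
    exact congrArg _ (prod_congr rfl fun j hj => by rw [h_erase j hj])
  simp_rw [← hprod, integral_fintype_prod_eq_prod, ← mul_prod_erase univ _ (mem_univ k)]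
  rw [h_self, prod_congr rfl fun j hj => by rw [h_erase j hj], prod_const,
    card_erase_of_mem (mem_univ k), card_univ]

noncomputable def uniformAngle : Measure ℝ :=
  ENNReal.ofReal (1 / (2 * Real.pi)) • volume.restrict (Set.Icc (-Real.pi) Real.pi)

instance : IsProbabilityMeasure uniformAngle := by
  constructor
  rw [uniformAngle, Measure.smul_apply, Measure.restrict_apply_univ, Real.volume_Icc, smul_eq_mul,
    ← ENNReal.ofReal_mul (by positivity), ← ENNReal.ofReal_one]
  congr 1
  field_simp
  ring

theorem integral_uniformAngle (f : ℝ → ℝ) :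
    ∫ x, f x ∂uniformAngle = (2 * Real.pi)⁻¹ * ∫ x in -Real.pi..Real.pi, f x := by
  rw [uniformAngle, integral_smul_measure, ENNReal.toReal_ofReal (by positivity),
    integral_Icc_eq_integral_Ioc, ← intervalIntegral.integral_of_le (by linarith [Real.pi_pos])]
  simp

theorem integral_half_sin_uniformAngle : ∫ x, 1 / 2 * Real.sin x ∂uniformAngle = 0 := by
  simp [integral_uniformAngle]

theorem integral_half_sin_sq_uniformAngle :
    ∫ x, (1 / 2 * Real.sin x) ^ 2 ∂uniformAngle = 1 / 8 := by
  simp_rw [mul_pow, integral_uniformAngle, intervalIntegral.integral_const_mul, integral_sin_sq]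
  simp only [Real.sin_neg, Real.sin_pi]
  field_simp
  ring

theorem integral_cos_half_pow_four :
    ∫ x in -Real.pi..Real.pi, Real.cos (x / 2) ^ 4 = 3 * Real.pi / 4 := by
  rw [intervalIntegral.integral_comp_div (fun x => Real.cos x ^ 4) two_ne_zero, neg_div,
    integral_cos_pow, integral_cos_sq]
  simp only [Real.cos_pi_div_two, Real.sin_pi_div_two, Real.cos_neg, Real.sin_neg]
  ring

theorem integral_cos_half_sq_sq_uniformAngle :
    ∫ x, (Real.cos (x / 2) ^ 2) ^ 2 ∂uniformAngle = 3 / 8 := by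
  simp_rw [← pow_mul, integral_uniformAngle, integral_cos_half_pow_four]
  field_simp
  ring

theorem projector_benchmark_gradient_variance_general (n : ℕ) (k : Fin n) :
    (∫ θ : Fin n → ℝ,
        ((1 / 2) * Real.sin (θ k) * ∏ j ∈ univ.erase k, Real.cos (θ j / 2) ^ 2)
        ∂(Measure.pi fun _ : Fin n =>
          (ENNReal.ofReal (1 / (2 * Real.pi))) •
            (volume.restrict (Set.Icc (-Real.pi) Real.pi))) = 0) ∧
    (∫ θ : Fin n → ℝ,
        ((1 / 2) * Real.sin (θ k) * ∏ j ∈ univ.erase k, Real.cos (θ j / 2) ^ 2) ^ 2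
        ∂(Measure.pi fun _ : Fin n =>
          (ENNReal.ofReal (1 / (2 * Real.pi))) •
            (volume.restrict (Set.Icc (-Real.pi) Real.pi)))
      = (1 / 8) * (3 / 8) ^ (n - 1)) := by
  refine ⟨?_, ?_⟩
  · refine (integral_pi_mul_prod_erase_eq uniformAngle k (fun x => 1 / 2 * Real.sin x)
      (fun x => Real.cos (x / 2) ^ 2)).trans ?_
    rw [integral_half_sin_uniformAngle, zero_mul]
  · simp_rw [mul_pow (_ * _), ← prod_pow]
    refine (integral_pi_mul_prod_erase_eq uniformAngle k (fun x => (1 / 2 * Real.sin x) ^ 2)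
      (fun x => (Real.cos (x / 2) ^ 2) ^ 2)).trans ?_
    rw [integral_half_sin_sq_uniformAngle, integral_cos_half_sq_sq_uniformAngle,
      Fintype.card_fin]

/-- **Barren-plateau variance of the untilted projector-benchmark gradient.** Under the
product of uniform measures on `[−π, π]` over `Fin n`, the gradient component
`g(θ) = (1/2)·sin(θ k)·∏_{j ≠ k} cos²(θ j / 2)` has mean zero and variance exactly
`(1/8)·(3/8)^(n−1)`, which decays exponentially in `n`. -/
theorem projector_benchmark_gradient_variance (n : ℕ) (hn : 1 ≤ n) (k : Fin n) :
    (∫ θ : Fin n → ℝ,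
        ((1 / 2) * Real.sin (θ k) * ∏ j ∈ univ.erase k, Real.cos (θ j / 2) ^ 2)
        ∂(Measure.pi fun _ : Fin n =>
          (ENNReal.ofReal (1 / (2 * Real.pi))) •
            (volume.restrict (Set.Icc (-Real.pi) Real.pi))) = 0) ∧
    (∫ θ : Fin n → ℝ,
        ((1 / 2) * Real.sin (θ k) * ∏ j ∈ univ.erase k, Real.cos (θ j / 2) ^ 2) ^ 2
        ∂(Measure.pi fun _ : Fin n =>
          (ENNReal.ofReal (1 / (2 * Real.pi))) •
            (volume.restrict (Set.Icc (-Real.pi) Real.pi)))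
      = (1 / 8) * (3 / 8) ^ (n - 1)) :=
  projector_benchmark_gradient_variance_general n k
end

section
/- For every real β > −1, the following integral identity holds: ∫_0^{π/2} sin²(u)·cos²(u) / (1 + β·sin²(u))² du = (π/4) · 1 / ( √(1+β) · (1 + √(1+β))² ). Equivalently, (8/π)·∫_0^{π/2} sin²u·cos²u/(1+β sin²u)² du = 2/( √(1+β)·(1+√(1+β))² ). -/
/-!
Write `β = t² - 1` with `t = √(1 + β) > 0` and `D = 1 + β sin² v`. Pointwise,
`β² sin² v cos² v / D² = -1 + (t² + 1)/(2t) · d/dv arctan (t tan v) - β/2 · d/dv (sin v cos v / D)`,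
where `d/dv arctan (t tan v) = t / D`. The last term vanishes at `0` and `π/2`, and a continuous
branch of `arctan (t tan v)` rises by `π/2` over `[0, π/2]`, so `β² ∫ = π (t - 1)² / (4t)`.
Dividing by `β² = (t - 1)² (t + 1)²` gives the claim; `β = 0` is the classical `∫ sin² cos² = π/16`.
-/

open Real

lemma one_add_mul_sin_sq_pos {β : ℝ} (hβ : -1 < β) (u : ℝ) : 0 < 1 + β * sin u ^ 2 := by
  nlinarith [sin_sq_add_cos_sq u, sq_nonneg (cos u), sq_nonneg (sin u),
    mul_nonneg (by linarith : (0 : ℝ) ≤ 1 + β) (sq_nonneg (sin u))]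

lemma hasDerivAt_sin_mul_cos_div {β u : ℝ} (h : 1 + β * sin u ^ 2 ≠ 0) :
    HasDerivAt (fun v => sin v * cos v / (1 + β * sin v ^ 2))
      ((1 - (β + 2) * sin u ^ 2) / (1 + β * sin u ^ 2) ^ 2) u := by
  have hsc : HasDerivAt (fun v => sin v * cos v) (cos u ^ 2 - sin u ^ 2) u :=
    ((hasDerivAt_sin u).mul (hasDerivAt_cos u)).congr_deriv (by ring)
  have hden : HasDerivAt (fun v => 1 + β * sin v ^ 2) (β * (2 * sin u * cos u)) u :=
    (((hasDerivAt_sin u).pow 2).const_mul β).const_add 1 |>.congr_deriv (by simp)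
  refine (hsc.div hden h).congr_deriv ?_
  field_simp
  simp only [cos_sq']
  ring

/-- A branch of `v ↦ arctan (t * tan v)` that is continuous on all of `ℝ`: on `(-π/2, π/2)`,
`arctan (t * tan v) - v = arctan ((t - 1) * tan v / (1 + t * tan v ^ 2))`. -/
noncomputable def arctanMulTan (t v : ℝ) : ℝ :=
  v + arctan ((t - 1) * (sin v * cos v / (1 + (t - 1) * sin v ^ 2)))

lemma hasDerivAt_arctanMulTan {t : ℝ} (ht : 0 < t) (u : ℝ) :
    HasDerivAt (arctanMulTan t) (t / (1 + (t ^ 2 - 1) * sin u ^ 2)) u := by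
  have hQ := one_add_mul_sin_sq_pos (by linarith : -1 < t - 1) u
  have hD := one_add_mul_sin_sq_pos (by nlinarith : -1 < t ^ 2 - 1) u
  refine ((hasDerivAt_id u).add ((hasDerivAt_sin_mul_cos_div hQ.ne').const_mul (t - 1)
    |>.arctan)).congr_deriv ?_
  have hR : 1 + ((t - 1) * (sin u * cos u / (1 + (t - 1) * sin u ^ 2))) ^ 2
      = (1 + (t ^ 2 - 1) * sin u ^ 2) / (1 + (t - 1) * sin u ^ 2) ^ 2 := by
    field_simp
    rw [cos_sq']
    ring
  rw [hR]
  have hQ' : 1 + sin u ^ 2 * (t - 1) ≠ 0 := by linarith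
  field_simp
  ring

lemma arctanMulTan_zero (t : ℝ) : arctanMulTan t 0 = 0 := by
  simp [arctanMulTan]

lemma arctanMulTan_pi_div_two (t : ℝ) : arctanMulTan t (π / 2) = π / 2 := by
  simp [arctanMulTan]

lemma sq_mul_integral_sin_sq_mul_cos_sq_div {t : ℝ} (ht : 0 < t) :
    (t ^ 2 - 1) ^ 2 * ∫ u in (0 : ℝ)..π / 2, sin u ^ 2 * cos u ^ 2 / (1 + (t ^ 2 - 1) * sin u ^ 2) ^ 2
      = π / 4 * (t - 1) ^ 2 / t := by
  have hD := one_add_mul_sin_sq_pos (by nlinarith : -1 < t ^ 2 - 1)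
  have hF : ∀ u, HasDerivAt
      (fun v => -v + (t ^ 2 + 1) / (2 * t) * arctanMulTan t v
        - (t ^ 2 - 1) / 2 * (sin v * cos v / (1 + (t ^ 2 - 1) * sin v ^ 2)))
      ((t ^ 2 - 1) ^ 2 * (sin u ^ 2 * cos u ^ 2 / (1 + (t ^ 2 - 1) * sin u ^ 2) ^ 2)) u := by
    intro u
    refine (((hasDerivAt_id u).neg.add ((hasDerivAt_arctanMulTan ht u).const_mul _)).sub
      ((hasDerivAt_sin_mul_cos_div (hD u).ne').const_mul _)).congr_deriv ?_
    have hDu := (hD u).ne'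
    field_simp
    rw [cos_sq']
    ring
  have hcont : Continuous fun u =>
      (t ^ 2 - 1) ^ 2 * (sin u ^ 2 * cos u ^ 2 / (1 + (t ^ 2 - 1) * sin u ^ 2) ^ 2) :=
    continuous_const.mul <| by fun_prop (disch := exact fun u => pow_ne_zero 2 (hD u).ne')
  rw [← intervalIntegral.integral_const_mul,
    intervalIntegral.integral_eq_sub_of_hasDerivAt (fun u _ => hF u) (hcont.intervalIntegrable _ _)]
  simp only [arctanMulTan_zero, arctanMulTan_pi_div_two, sin_zero, cos_pi_div_two]
  field_simp
  ring

/-- **Tilted gradient-variance integral identity.** For every real `β > −1`,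
`∫_0^{π/2} sin²u·cos²u / (1 + β·sin²u)² du = (π/4)·1/(√(1+β)·(1+√(1+β))²)`. -/
theorem tilted_variance_integral (β : ℝ) (hβ : -1 < β) :
    ∫ u in (0 : ℝ)..(Real.pi / 2),
        Real.sin u ^ 2 * Real.cos u ^ 2 / (1 + β * Real.sin u ^ 2) ^ 2
      = (Real.pi / 4) *
          (1 / (Real.sqrt (1 + β) * (1 + Real.sqrt (1 + β)) ^ 2)) := by
  obtain ⟨t, ht, rfl⟩ : ∃ t > 0, β = t ^ 2 - 1 :=
    ⟨√(1 + β), sqrt_pos.2 (by linarith), by rw [sq_sqrt (by linarith)]; ring⟩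
  rw [add_sub_cancel, sqrt_sq ht.le]
  rcases eq_or_ne t 1 with rfl | ht1
  · have h4 : 4 * (π / 2) = 2 * π := by ring
    norm_num [integral_sin_sq_mul_cos_sq, h4]
    ring
  · have hβ0 : (t ^ 2 - 1) ^ 2 ≠ 0 := pow_ne_zero 2 fun h => ht1 (by nlinarith)
    rw [← mul_right_inj' hβ0, sq_mul_integral_sin_sq_mul_cos_sq_div ht]
    field_simp
    ring
end
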